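/- arXiv:0904.0200 — 7 statements merged into one kernel-verified Lean document; each statement's English description precedes it below -/
import Mathlib

section
/- Let N ≥ 2 and let B be an N×N skew-symmetric integer matrix such that node 1 is a sink of B. Then μ₁(B) = ρ B ρ⁻¹ (i.e. B has mutation period 1) if and only if τ B τ⁻¹ = B. -/
open Matrix

/-- The cyclic permutation matrix ρ: ρ_{i+1,i} = 1 (1-based), ρ_{1,N} = 1. -/
def rhoM (N : ℕ) : Matrix (Fin N) (Fin N) ℤ :=
  Matrix.of fun i j => if (i : ℕ) = ((j : ℕ) + 1) % N then 1 else 0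

/-- The skew-rotation τ: equal to ρ except τ_{1,N} = −1. -/
def tauM (N : ℕ) : Matrix (Fin N) (Fin N) ℤ :=
  Matrix.of fun i j =>
    if (i : ℕ) = ((j : ℕ) + 1) % N then (if (j : ℕ) + 1 = N then -1 else 1) else 0

/-- Fomin–Zelevinsky matrix mutation at node `k`. -/
def mutB {N : ℕ} (k : Fin N) (B : Matrix (Fin N) (Fin N) ℤ) : Matrix (Fin N) (Fin N) ℤ :=
  Matrix.of fun i j =>
    if i = k ∨ j = k then -B i j
    else B i j + (|B i k| * B k j + B i k * |B k j|) / 2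

/-- Node `k` is a sink of `B` if all entries of column `k` are nonnegative. -/
def IsSink {N : ℕ} (k : Fin N) (B : Matrix (Fin N) (Fin N) ℤ) : Prop :=
  ∀ i, 0 ≤ B i k

/-!
Write `D` for the diagonal sign matrix with `-1` at node `1` and `1` elsewhere. At a sink, the
correction term of the mutation rule vanishes, so `μ₁ B = D B D`; and `τ = D ρ`. As `D² = 1`,
`τ B τ⁻¹ = D (ρ B ρ⁻¹) D`, which equals `B` exactly when `ρ B ρ⁻¹ = D B D = μ₁ B`.
-/

def signDiag {N : ℕ} (k : Fin N) : Matrix (Fin N) (Fin N) ℤ :=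
  diagonal fun i => if i = k then -1 else 1

theorem signDiag_mul_self {N : ℕ} (k : Fin N) : signDiag k * signDiag k = 1 := by
  rw [signDiag, diagonal_mul_diagonal, ← diagonal_one]
  congr 1
  ext i
  split_ifs <;> norm_num

theorem signDiag_inv {N : ℕ} (k : Fin N) : (signDiag k)⁻¹ = signDiag k :=
  inv_eq_left_inv (signDiag_mul_self k)

theorem signDiag_conj_apply {N : ℕ} (k : Fin N) (B : Matrix (Fin N) (Fin N) ℤ) (i j : Fin N) :
    (signDiag k * B * signDiag k) i j =
      (if i = k then -1 else 1) * B i j * (if j = k then -1 else 1) := by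
  simp only [signDiag, diagonal_mul, mul_diagonal]

theorem mutB_eq_signDiag_conj_of_isSink {N : ℕ} {k : Fin N} {B : Matrix (Fin N) (Fin N) ℤ}
    (hskew : Bᵀ = -B) (hk : IsSink k B) : mutB k B = signDiag k * B * signDiag k := by
  have hB : ∀ a b, B a b = -B b a := fun a b => by
    simpa using congrFun (congrFun hskew b) a
  ext i j
  rw [signDiag_conj_apply]
  by_cases hi : i = k <;> by_cases hj : j = k
  · have hkk : B k k = 0 := by linarith [hB k k]
    simp [mutB, hi, hj, hkk]
  · simp [mutB, hi, hj]
  · simp [mutB, hi, hj]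
  · have hik : |B i k| = B i k := abs_of_nonneg (hk i)
    have hkj : |B k j| = -B k j := abs_of_nonpos (by linarith [hB k j, hk j])
    simp [mutB, hi, hj, hik, hkj]

theorem tauM_eq_signDiag_mul_rhoM {N : ℕ} (hN : 0 < N) : tauM N = signDiag ⟨0, hN⟩ * rhoM N := by
  ext i j
  simp only [tauM, rhoM, signDiag, diagonal_mul, of_apply, Fin.ext_iff]
  rcases Nat.lt_or_ge ((j : ℕ) + 1) N with hj | hj
  · rw [Nat.mod_eq_of_lt hj]
    split_ifs <;> omega
  · have hjN : (j : ℕ) + 1 = N := by omega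
    rw [hjN, Nat.mod_self]
    split_ifs <;> omega

theorem conj_eq_iff_conj_eq {M : Type*} [Monoid M] {d : M} (hd : d * d = 1) {x y : M} :
    d * x * d = y ↔ d * y * d = x := by
  have key : ∀ {x y : M}, d * x * d = y → d * y * d = x := by
    rintro x y rfl
    rw [← mul_assoc, ← mul_assoc, hd, one_mul, mul_assoc, hd, mul_one]
  exact ⟨key, key⟩

theorem stmt0 (N : ℕ) (hN : 2 ≤ N) (B : Matrix (Fin N) (Fin N) ℤ)
    (hskew : Bᵀ = -B) (hsink : IsSink ⟨0, by omega⟩ B) :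
    mutB ⟨0, by omega⟩ B = rhoM N * B * (rhoM N)⁻¹ ↔ tauM N * B * (tauM N)⁻¹ = B := by
  set D := signDiag (⟨0, by omega⟩ : Fin N)
  have hτ : tauM N * B * (tauM N)⁻¹ = D * (rhoM N * B * (rhoM N)⁻¹) * D := by
    rw [tauM_eq_signDiag_mul_rhoM (by omega), Matrix.mul_inv_rev, signDiag_inv]
    simp only [D, Matrix.mul_assoc]
  rw [mutB_eq_signDiag_conj_of_isSink hskew hsink, hτ]
  exact conj_eq_iff_conj_eq (signDiag_mul_self _)
end

section
/- (a) Let M be an N×N real skew-symmetric matrix with M_{ij} ≥ 0 whenever i ≥ j. Then τ M τ⁻¹ also satisfies (τ M τ⁻¹)_{ij} ≥ 0 whenever i ≥ j. (b) Consequently, for N = 2r every period 2 primitive B_{N,2}^{(k,l)} (1 ≤ k ≤ r−1 and l ∈ {1,2}, and also k = r when 4 | N) has nonnegative entries below the leading diagonal. -/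
open Matrix

/-- The skew-rotation τ as a real matrix. -/
def tauR (N : ℕ) : Matrix (Fin N) (Fin N) ℝ :=
  Matrix.of fun i j =>
    if (i : ℕ) = ((j : ℕ) + 1) % N then (if (j : ℕ) + 1 = N then -1 else 1) else 0

/-- The matrix `R_N^(k)`: entry `(N−k+1, 1)` (1-based) equal to 1,
entry `(1, N−k+1)` equal to −1, all other entries 0. -/
def RM (N k : ℕ) : Matrix (Fin N) (Fin N) ℤ :=
  Matrix.of fun i j =>
    if (i : ℕ) = N - k ∧ (j : ℕ) = 0 then 1
    else if (i : ℕ) = 0 ∧ (j : ℕ) = N - k then -1 else 0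

/-- The first period 2 primitive `B_{N,2}^(k,1)` with `t` terms:
`Σ_{i=0}^{t−1} τ^{2i} R_N^(k) τ^{−2i}`. -/
noncomputable def B2p1 (N k t : ℕ) : Matrix (Fin N) (Fin N) ℤ :=
  ∑ i ∈ Finset.range t, (tauM N) ^ (2 * i) * RM N k * ((tauM N)⁻¹) ^ (2 * i)

/-- The second period 2 primitive `B_{N,2}^(k,2) := τ B_{N,2}^(k,1) τ⁻¹`. -/
noncomputable def B2p2 (N k t : ℕ) : Matrix (Fin N) (Fin N) ℤ :=
  tauM N * B2p1 N k t * (tauM N)⁻¹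

/-!
With 0-based indices, `τ M τᵀ` has `(i, j)` entry `± M (i - 1) (j - 1)` (indices mod `N`), the
sign being `-1` exactly when one of `i, j` is `0`; and `τ` is orthogonal, so `τ⁻¹ = τᵀ`.
For `i, j ≠ 0` the shift preserves `j ≤ i`; in row `0` only the diagonal entry lies on or below
the diagonal, and its two signs cancel; in column `0` the entry is
`-M (i - 1) (N - 1) = M (N - 1) (i - 1)` by skew-symmetry. So skew-symmetric matrices with
nonnegative lower triangle are stable under conjugation by `τ` and under sums; `R_N^(k)` is one
of them, hence so are both primitives.
-/
def skewRotation (R : Type*) [Ring R] (N : ℕ) : Matrix (Fin N) (Fin N) R :=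
  Matrix.of fun i j =>
    if (i : ℕ) = ((j : ℕ) + 1) % N then (if (j : ℕ) + 1 = N then -1 else 1) else 0

theorem tauM_eq_skewRotation (N : ℕ) : tauM N = skewRotation ℤ N := rfl
theorem tauR_eq_skewRotation (N : ℕ) : tauR N = skewRotation ℝ N := rfl

variable {R : Type*}

section Entries

variable [Ring R] {n : ℕ} (M : Matrix (Fin (n + 1)) (Fin (n + 1)) R) (i j : Fin (n + 1))

theorem skewRotation_apply :
    skewRotation R (n + 1) i j = if j = i - 1 then (if i = 0 then -1 else 1) else 0 := by
  have hsucc : ((j : ℕ) + 1) % (n + 1) = ((j + 1 : Fin (n + 1)) : ℕ) := by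
    rw [Fin.val_add_one]
    split_ifs with h
    · simp [h]
    · exact Nat.mod_eq_of_lt (Nat.succ_lt_succ (Fin.val_lt_last h))
  have hwrap (h : j = i - 1) : (j : ℕ) + 1 = n + 1 ↔ i = 0 := by
    subst h
    rw [Fin.coe_sub_one]
    split_ifs with h <;> simp [h]
    omega
  simp only [skewRotation, of_apply, hsucc, ← Fin.ext_iff, ← eq_sub_iff_add_eq,
    eq_comm (a := i)]
  split_ifs <;> simp_all

theorem skewRotation_mul_apply :
    (skewRotation R (n + 1) * M) i j = (if i = 0 then -1 else 1) * M (i - 1) j := by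
  rw [Matrix.mul_apply, Finset.sum_eq_single (i - 1)]
  · rw [skewRotation_apply, if_pos rfl]
  · intro k _ hk
    rw [skewRotation_apply, if_neg hk, zero_mul]
  · simp

theorem mul_transpose_skewRotation_apply :
    (M * (skewRotation R (n + 1))ᵀ) i j = M i (j - 1) * (if j = 0 then -1 else 1) := by
  rw [Matrix.mul_apply, Finset.sum_eq_single (j - 1)]
  · rw [transpose_apply, skewRotation_apply, if_pos rfl]
  · intro k _ hk
    rw [transpose_apply, skewRotation_apply, if_neg hk, mul_zero]
  · simp

theorem skewRotation_conj_apply :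
    (skewRotation R (n + 1) * M * (skewRotation R (n + 1))ᵀ) i j =
      (if i = 0 then -1 else 1) * M (i - 1) (j - 1) * (if j = 0 then -1 else 1) := by
  rw [mul_transpose_skewRotation_apply, skewRotation_mul_apply]

end Entries

theorem skewRotation_mul_transpose_self [Ring R] (N : ℕ) :
    skewRotation R N * (skewRotation R N)ᵀ = 1 := by
  cases N with
  | zero => exact Subsingleton.elim _ _
  | succ n =>
    ext i j
    have h := skewRotation_conj_apply (R := R) 1 i j
    rw [Matrix.mul_one] at h
    rw [h, one_apply, one_apply]
    simp only [sub_left_inj]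
    split_ifs <;> simp_all

theorem skewRotation_inv [CommRing R] (N : ℕ) :
    (skewRotation R N)⁻¹ = (skewRotation R N)ᵀ :=
  inv_eq_right_inv (skewRotation_mul_transpose_self N)

variable {N : ℕ}

structure IsSkewLowerNonneg [Neg R] [Zero R] [LE R] (M : Matrix (Fin N) (Fin N) R) : Prop where
  transpose_eq_neg : Mᵀ = -M
  nonneg_of_le : ∀ i j : Fin N, (j : ℕ) ≤ (i : ℕ) → 0 ≤ M i j

namespace IsSkewLowerNonneg

section Sum

variable [AddCommGroup R] [Preorder R] [AddLeftMono R]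

theorem add {A B : Matrix (Fin N) (Fin N) R} (hA : IsSkewLowerNonneg A)
    (hB : IsSkewLowerNonneg B) : IsSkewLowerNonneg (A + B) :=
  ⟨by rw [transpose_add, hA.transpose_eq_neg, hB.transpose_eq_neg, neg_add],
    fun i j hij => add_nonneg (hA.nonneg_of_le i j hij) (hB.nonneg_of_le i j hij)⟩

theorem sum {ι : Type*} (s : Finset ι) {A : ι → Matrix (Fin N) (Fin N) R}
    (hA : ∀ i ∈ s, IsSkewLowerNonneg (A i)) : IsSkewLowerNonneg (∑ i ∈ s, A i) :=
  Finset.sum_induction A IsSkewLowerNonneg (fun _ _ => add) ⟨by simp, fun _ _ _ => le_rfl⟩ hA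

end Sum

section Conj

variable [CommRing R] [LE R]

theorem conj_skewRotation {M : Matrix (Fin N) (Fin N) R} (hM : IsSkewLowerNonneg M) :
    IsSkewLowerNonneg (skewRotation R N * M * (skewRotation R N)ᵀ) where
  transpose_eq_neg := by
    simp only [transpose_mul, transpose_transpose, hM.transpose_eq_neg, Matrix.mul_neg,
      Matrix.neg_mul, Matrix.mul_assoc]
  nonneg_of_le := by
    cases N with
    | zero => exact fun i => i.elim0
    | succ n =>
      intro i j hji
      have hskew (a b : Fin (n + 1)) : M a b = -M b a := by
        rw [← neg_apply, ← hM.transpose_eq_neg, transpose_apply]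
      rw [skewRotation_conj_apply]
      by_cases hi : i = 0
      · have hj : j = 0 := by simpa [hi] using hji
        simpa [hi, hj] using hM.nonneg_of_le _ _ le_rfl
      by_cases hj : j = 0
      · simp only [hi, hj, if_false, if_true, one_mul, mul_neg_one, hskew (i - 1), neg_neg]
        exact hM.nonneg_of_le _ _ (by rw [zero_sub, Fin.coe_neg_one]; exact Fin.is_le _)
      · simp only [hi, hj, if_false, one_mul, mul_one]
        exact hM.nonneg_of_le _ _ (by
          rw [Fin.val_sub_one_of_ne_zero hi, Fin.val_sub_one_of_ne_zero hj]; omega)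

theorem conj_skewRotation_pow {M : Matrix (Fin N) (Fin N) R} (hM : IsSkewLowerNonneg M) (m : ℕ) :
    IsSkewLowerNonneg (skewRotation R N ^ m * M * (skewRotation R N ^ m)ᵀ) := by
  induction m with
  | zero => simpa using hM
  | succ m ih =>
    simpa only [pow_succ', transpose_mul, Matrix.mul_assoc] using ih.conj_skewRotation

end Conj

end IsSkewLowerNonneg

theorem isSkewLowerNonneg_RM {N k : ℕ} (hk : k < N) : IsSkewLowerNonneg (RM N k) where
  transpose_eq_neg := by
    ext i j
    simp only [RM, transpose_apply, of_apply, neg_apply]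
    split_ifs <;> omega
  nonneg_of_le i j hji := by
    simp only [RM, of_apply]
    split_ifs <;> omega

theorem isSkewLowerNonneg_B2p1 {N k : ℕ} (hk : k < N) (t : ℕ) :
    IsSkewLowerNonneg (B2p1 N k t) := by
  simp only [B2p1, tauM_eq_skewRotation, skewRotation_inv, ← transpose_pow]
  exact IsSkewLowerNonneg.sum _ fun m _ => (isSkewLowerNonneg_RM hk).conj_skewRotation_pow (2 * m)

theorem isSkewLowerNonneg_B2p2 {N k : ℕ} (hk : k < N) (t : ℕ) :
    IsSkewLowerNonneg (B2p2 N k t) := by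
  rw [B2p2, tauM_eq_skewRotation, skewRotation_inv]
  exact (isSkewLowerNonneg_B2p1 hk t).conj_skewRotation

/-- (a) Conjugation by τ preserves the property of a real skew-symmetric matrix that
all entries on or below the diagonal are nonnegative; (b) consequently all period 2
primitives have nonnegative entries below the leading diagonal. -/
theorem stmt4 (N : ℕ) :
    (∀ M : Matrix (Fin N) (Fin N) ℝ, Mᵀ = -M →
      (∀ i j : Fin N, (j : ℕ) ≤ (i : ℕ) → 0 ≤ M i j) →
      ∀ i j : Fin N, (j : ℕ) ≤ (i : ℕ) → 0 ≤ (tauR N * M * (tauR N)⁻¹) i j) ∧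
    (∀ r : ℕ, N = 2 * r →
      (∀ k, 1 ≤ k → k ≤ r - 1 →
        (∀ i j : Fin N, (j : ℕ) ≤ (i : ℕ) → 0 ≤ B2p1 N k r i j) ∧
        (∀ i j : Fin N, (j : ℕ) ≤ (i : ℕ) → 0 ≤ B2p2 N k r i j)) ∧
      (4 ∣ N →
        (∀ i j : Fin N, (j : ℕ) ≤ (i : ℕ) → 0 ≤ B2p1 N r (r / 2) i j) ∧
        (∀ i j : Fin N, (j : ℕ) ≤ (i : ℕ) → 0 ≤ B2p2 N r (r / 2) i j))) := by
  refine ⟨fun M hskew hnonneg => ?_, fun r hr => ⟨fun k hk₁ hk₂ => ?_, fun _ => ?_⟩⟩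
  · rw [tauR_eq_skewRotation, skewRotation_inv]
    exact (IsSkewLowerNonneg.mk hskew hnonneg).conj_skewRotation.nonneg_of_le
  · exact ⟨(isSkewLowerNonneg_B2p1 (by omega) r).nonneg_of_le,
      (isSkewLowerNonneg_B2p2 (by omega) r).nonneg_of_le⟩
  · obtain hrN | rfl : r < N ∨ N = 0 := by omega
    · exact ⟨(isSkewLowerNonneg_B2p1 hrN _).nonneg_of_le,
        (isSkewLowerNonneg_B2p2 hrN _).nonneg_of_le⟩
    · exact ⟨fun i => i.elim0, fun i => i.elim0⟩
end

section
/- Let N ≥ 3 be odd and let B be an N×N skew-symmetric integer matrix such that node 1 is a sink of B, node 2 is a sink of μ₁(B), and μ₂(μ₁(B)) = ρ² B ρ⁻². Then μ₁(B) = ρ B ρ⁻¹ (i.e. B already has period 1). In particular, there are no strictly period 2 sink-type quivers with an odd number of nodes. -/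
/-!
At a sink `k` of a skew-symmetric matrix the correction term of mutation vanishes, so `μ_k` only
flips the signs of row and column `k`. The period-2 condition therefore says that rotating `B` by
two nodes flips the signs of rows and columns `0` and `1`. For odd `N` these flips are absorbed by
the alternating signs `(-1)^i` (indices read in `0, …, N-1`): the twisted matrix
`(-1)^(i+j) B_{ij}` is invariant under rotation by two, hence under rotation by one because `2`
generates `ℤ/N`, and untwisting this invariance gives `μ₁ B = ρ B ρ⁻¹`.
-/

open Matrix

open Function
open scoped Fin.CommRing

variable {N : ℕ}

def flipSign (k i : Fin N) : ℤ := if i = k then -1 else 1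

def altSign (i : Fin N) : ℤ := (-1) ^ (i : ℕ)

def altSignTwist (B : Matrix (Fin N) (Fin N) ℤ) : Matrix (Fin N) (Fin N) ℤ :=
  of fun i j => altSign i * altSign j * B i j

theorem altSign_mul_self (i : Fin N) : altSign i * altSign i = 1 := by
  rw [altSign, ← mul_pow]; norm_num

section Mutation

variable {B : Matrix (Fin N) (Fin N) ℤ} {k : Fin N}

theorem mutB_apply_of_isSink (hB : Bᵀ = -B) (hk : IsSink k B) (i j : Fin N) :
    mutB k B i j = flipSign k i * flipSign k j * B i j := by
  have hskew (i j : Fin N) : B j i = -B i j := by simpa using congrFun (congrFun hB i) j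
  by_cases hi : i = k <;> by_cases hj : j = k
  · have hkk : B k k = 0 := by linarith [hskew k k]
    simp [mutB, flipSign, hi, hj, hkk]
  · simp [mutB, flipSign, hi, hj]
  · simp [mutB, flipSign, hi, hj]
  · -- the two products in the correction term cancel since `B i k ≥ 0 ≥ B k j`
    have hkj : B k j ≤ 0 := by linarith [hk j, hskew j k]
    simp [mutB, flipSign, hi, hj, abs_of_nonneg (hk i), abs_of_nonpos hkj]

theorem transpose_mutB_of_isSink (hB : Bᵀ = -B) (hk : IsSink k B) :
    (mutB k B)ᵀ = -mutB k B := by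
  ext i j
  have hji : B j i = -B i j := by simpa using congrFun (congrFun hB i) j
  simp only [transpose_apply, neg_apply, mutB_apply_of_isSink hB hk, hji]
  ring

end Mutation

section Rotation

variable [NeZero N]

theorem rhoM_apply (i j : Fin N) : rhoM N i j = if j = i - 1 then 1 else 0 := by
  have : (i : ℕ) = ((j : ℕ) + 1) % N ↔ j = i - 1 := by
    rw [eq_sub_iff_add_eq, Fin.ext_iff, Fin.val_add, Fin.val_one', Nat.add_mod_mod, eq_comm]
  simp only [rhoM, of_apply, this]

theorem rhoM_mul_apply (M : Matrix (Fin N) (Fin N) ℤ) (i j : Fin N) :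
    (rhoM N * M) i j = M (i - 1) j := by
  simp [mul_apply, rhoM_apply]

theorem mul_rhoM_transpose_apply (M : Matrix (Fin N) (Fin N) ℤ) (i j : Fin N) :
    (M * (rhoM N)ᵀ) i j = M i (j - 1) := by
  simp [mul_apply, rhoM_apply]

theorem rhoM_inv : (rhoM N)⁻¹ = (rhoM N)ᵀ := by
  refine inv_eq_right_inv (ext fun i j => ?_)
  simp [mul_rhoM_transpose_apply, rhoM_apply, one_apply, eq_comm]

theorem rhoM_conj_apply (M : Matrix (Fin N) (Fin N) ℤ) (i j : Fin N) :
    (rhoM N * M * (rhoM N)⁻¹) i j = M (i - 1) (j - 1) := by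
  rw [rhoM_inv, mul_rhoM_transpose_apply, rhoM_mul_apply]

theorem rhoM_sq_conj_apply (M : Matrix (Fin N) (Fin N) ℤ) (i j : Fin N) :
    (rhoM N ^ 2 * M * (rhoM N)⁻¹ ^ 2) i j = M (i - 2) (j - 2) := by
  have : rhoM N ^ 2 * M * (rhoM N)⁻¹ ^ 2 = rhoM N * (rhoM N * M * (rhoM N)⁻¹) * (rhoM N)⁻¹ := by
    simp only [sq, Matrix.mul_assoc]
  rw [this, rhoM_conj_apply, rhoM_conj_apply, sub_sub, one_add_one_eq_two, sub_sub,
    one_add_one_eq_two]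

end Rotation

section Parity

variable [NeZero N]

theorem altSign_sub_one_mul_altSign (hodd : Odd N) (i : Fin N) :
    altSign (i - 1) * altSign i = -flipSign 0 i := by
  -- at `i = 0` the index wraps around to `N - 1`, which is even
  obtain ⟨n, rfl⟩ : ∃ n, N = n + 1 := ⟨N - 1, by have := NeZero.ne N; omega⟩
  have hn : Even n := by simpa [Nat.odd_add_one] using hodd
  rw [altSign, altSign, flipSign, Fin.coe_sub_one]
  by_cases hi : i = 0
  · simp [hi, hn.neg_one_pow]
  · obtain ⟨m, hm⟩ : ∃ m, (i : ℕ) = m + 1 := ⟨i - 1, by have := Fin.pos_iff_ne_zero.2 hi; omega⟩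
    simp [hi, hm, pow_succ, ← mul_pow]

theorem altSign_add_two_mul_altSign (hodd : Odd N) (i : Fin N) :
    altSign (i + 2) * altSign i = flipSign 1 (i + 2) * flipSign 0 (i + 2) := by
  have h₂ := altSign_sub_one_mul_altSign hodd (i + 2)
  have h₁ := altSign_sub_one_mul_altSign hodd (i + 1)
  have hsub : i + 2 - 1 = i + 1 := by ring
  have hflip : flipSign 0 (i + 1) = flipSign 1 (i + 2) := by
    simp only [flipSign, ← hsub, sub_eq_zero]
  rw [hsub] at h₂
  rw [add_sub_cancel_right] at h₁
  calc altSign (i + 2) * altSign i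
      = (altSign i * altSign (i + 1)) * (altSign (i + 1) * altSign (i + 2)) := by
        linear_combination (altSign (i + 2) * altSign i) * (altSign_mul_self (i + 1)).symm
    _ = flipSign 1 (i + 2) * flipSign 0 (i + 2) := by
        rw [h₁, h₂, hflip]; ring

theorem Function.Periodic.one_of_two_of_odd {α : Type*} (hodd : Odd N) {f : Fin N → α}
    (hf : Periodic f 2) : Periodic f 1 := by
  obtain ⟨m, hm⟩ := hodd
  have : (m + 1) • (2 : Fin N) = 1 := by
    rw [nsmul_eq_mul, show ((m + 1 : ℕ) : Fin N) * 2 = (N : ℕ) + 1 by push_cast [hm]; ring,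
      Fin.natCast_self, zero_add]
  simpa [this] using hf.nsmul (m + 1)

end Parity

section PeriodTwo

variable [NeZero N] {B : Matrix (Fin N) (Fin N) ℤ}

theorem altSignTwist_apply_add_two (hodd : Odd N) (hB : Bᵀ = -B) (h₀ : IsSink 0 B)
    (h₁ : IsSink 1 (mutB 0 B)) (hper : mutB 1 (mutB 0 B) = rhoM N ^ 2 * B * (rhoM N)⁻¹ ^ 2)
    (i j : Fin N) :
    altSignTwist B (i + 2) (j + 2) = altSignTwist B i j := by
  simp only [altSignTwist, of_apply]
  have hij := congrFun (congrFun hper (i + 2)) (j + 2)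
  rw [mutB_apply_of_isSink (transpose_mutB_of_isSink hB h₀) h₁, mutB_apply_of_isSink hB h₀,
    rhoM_sq_conj_apply, add_sub_cancel_right, add_sub_cancel_right] at hij
  calc altSign (i + 2) * altSign (j + 2) * B (i + 2) (j + 2)
      = (altSign i * altSign i) * (altSign j * altSign j)
          * (altSign (i + 2) * altSign (j + 2) * B (i + 2) (j + 2)) := by
        rw [altSign_mul_self, altSign_mul_self, one_mul, one_mul]
    _ = altSign i * altSign j * ((altSign (i + 2) * altSign i) * (altSign (j + 2) * altSign j)
          * B (i + 2) (j + 2)) := by ring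
    _ = altSign i * altSign j * B i j := by
        rw [altSign_add_two_mul_altSign hodd, altSign_add_two_mul_altSign hodd, ← hij]; ring

theorem mutB_zero_eq_rhoM_conj (hodd : Odd N) (hB : Bᵀ = -B) (h₀ : IsSink 0 B)
    (h₁ : IsSink 1 (mutB 0 B)) (hper : mutB 1 (mutB 0 B) = rhoM N ^ 2 * B * (rhoM N)⁻¹ ^ 2) :
    mutB 0 B = rhoM N * B * (rhoM N)⁻¹ := by
  have htwist : Periodic (fun t i j => altSignTwist B (i + t) (j + t)) 2 := fun t => by
    ext i j
    simpa only [add_assoc] using altSignTwist_apply_add_two hodd hB h₀ h₁ hper (i + t) (j + t)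
  ext i j
  have hshift := congrFun (congrFun (htwist.one_of_two_of_odd hodd 0) (i - 1)) (j - 1)
  simp only [altSignTwist, of_apply, zero_add, add_zero, sub_add_cancel] at hshift
  rw [rhoM_conj_apply, mutB_apply_of_isSink hB h₀]
  calc flipSign 0 i * flipSign 0 j * B i j
      = altSign (i - 1) * altSign (j - 1) * (altSign i * altSign j * B i j) := by
        rw [← neg_neg (flipSign 0 i), ← neg_neg (flipSign 0 j),
          ← altSign_sub_one_mul_altSign hodd, ← altSign_sub_one_mul_altSign hodd]
        ring
    _ = (altSign (i - 1) * altSign (i - 1)) * (altSign (j - 1) * altSign (j - 1))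
          * B (i - 1) (j - 1) := by
        rw [hshift]; ring
    _ = B (i - 1) (j - 1) := by
        rw [altSign_mul_self, altSign_mul_self, one_mul, one_mul]

/-- For odd `N`, a sink-type period 2 matrix already has period 1: there are no
strictly period 2 sink-type quivers with an odd number of nodes. -/
theorem stmt5 (N : ℕ) (hN : 3 ≤ N) (hodd : Odd N) (B : Matrix (Fin N) (Fin N) ℤ)
    (hskew : Bᵀ = -B) (hsink1 : IsSink ⟨0, by omega⟩ B)
    (hsink2 : IsSink ⟨1, by omega⟩ (mutB ⟨0, by omega⟩ B))
    (hper : mutB ⟨1, by omega⟩ (mutB ⟨0, by omega⟩ B)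
            = rhoM N ^ 2 * B * ((rhoM N)⁻¹) ^ 2) :
    mutB ⟨0, by omega⟩ B = rhoM N * B * (rhoM N)⁻¹ := by
  have : NeZero N := ⟨by omega⟩
  have hone : (⟨1, by omega⟩ : Fin N) = 1 := Fin.ext (Nat.mod_eq_of_lt (by omega)).symm
  rw [hone] at hsink2 hper
  exact mutB_zero_eq_rhoM_conj hodd hskew hsink1 hsink2 hper
end PeriodTwo
end

section
/- Let B be a 3×3 skew-symmetric integer matrix satisfying μ₂(μ₁(B)) = ρ² B ρ⁻² but μ₁(B) ≠ ρ B ρ⁻¹ (i.e. B is strictly of mutation period 2). Then B = C or B = −C, where C is the matrix with rows (0, −2, 2), (2, 0, −2), (−2, 2, 0). -/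
/-!
Write a skew-symmetric `B` through its entries `a = B₁₂`, `b = B₁₃`, `c = B₂₃`. Comparing
entries, `μ₂ μ₁ B = ρ² B ρ⁻²` says `c = a` and `b - a = (|a| b - a |b|) / 2`, and then
`μ₁ B ≠ ρ B ρ⁻¹` says `a ≠ b`. If `a` and `b` had the same sign the right-hand side would
vanish, so they have opposite signs and the equation becomes `(a - 1)(b + 1) = -1` or
`(a + 1)(b - 1) = -1`, whose only solutions with `a ≠ b` are `(a, b) = ±(2, -2)`.
-/

open Matrix

theorem Int.eq_two_neg_two_of_sub_eq_half {a b : ℤ} (h : b - a = (|a| * b - a * |b|) / 2)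
    (hab : a ≠ b) : a = 2 ∧ b = -2 ∨ a = -2 ∧ b = 2 := by
  rcases abs_cases a with ⟨ha, ha0⟩ | ⟨ha, ha0⟩ <;> rcases abs_cases b with ⟨hb, hb0⟩ | ⟨hb, hb0⟩
  · have h0 : |a| * b - a * |b| = 0 := by rw [ha, hb]; ring
    rw [h0] at h
    omega
  · have h2 : |a| * b - a * |b| = 2 * (a * b) := by rw [ha, hb]; ring
    rw [h2, Int.mul_ediv_cancel_left _ two_ne_zero] at h
    have : (a - 1) * (b + 1) = -1 := by linear_combination -h
    rcases Int.eq_one_or_neg_one_of_mul_eq_neg_one' this with ⟨h1, h2⟩ | ⟨h1, h2⟩ <;> omega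
  · have h2 : |a| * b - a * |b| = 2 * -(a * b) := by rw [ha, hb]; ring
    rw [h2, Int.mul_ediv_cancel_left _ two_ne_zero] at h
    have : (a + 1) * (b - 1) = -1 := by linear_combination h
    rcases Int.eq_one_or_neg_one_of_mul_eq_neg_one' this with ⟨h1, h2⟩ | ⟨h1, h2⟩ <;> omega
  · have h0 : |a| * b - a * |b| = 0 := by rw [ha, hb]; ring
    rw [h0] at h
    omega

theorem Int.even_abs_mul_add_mul_abs (x y : ℤ) : Even (|x| * y + x * |y|) := by
  rcases abs_cases x with ⟨hx, -⟩ | ⟨hx, -⟩ <;> rcases abs_cases y with ⟨hy, -⟩ | ⟨hy, -⟩ <;>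
    rw [hx, hy]
  · exact ⟨x * y, by ring⟩
  · exact ⟨0, by ring⟩
  · exact ⟨0, by ring⟩
  · exact ⟨-(x * y), by ring⟩

theorem transpose_mutB_of_transpose_eq_neg {N : ℕ} (k : Fin N) {B : Matrix (Fin N) (Fin N) ℤ}
    (h : Bᵀ = -B) : (mutB k B)ᵀ = -mutB k B := by
  have hB : ∀ i j, B j i = -B i j := fun i j => congrFun (congrFun h i) j
  ext i j
  simp only [transpose_apply, neg_apply, mutB, of_apply]
  split_ifs with hk hk' hk'
  · rw [hB i j]
  · exact absurd hk.symm hk'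
  · exact absurd hk'.symm hk
  -- `Int.ediv` commutes with negation only on multiples of `2`, hence the parity lemma.
  · have hnum : |B j k| * B k i + B j k * |B k i| = -(|B i k| * B k j + B i k * |B k j|) := by
      rw [hB i k, hB k j, abs_neg, abs_neg]; ring
    rw [hB i j, hnum, Int.neg_ediv_of_dvd (Int.even_abs_mul_add_mul_abs _ _).two_dvd]
    ring

def skew3 (a b c : ℤ) : Matrix (Fin 3) (Fin 3) ℤ :=
  !![0, a, b; -a, 0, c; -b, -c, 0]

theorem skew3_inj {a b c a' b' c' : ℤ} :
    skew3 a b c = skew3 a' b' c' ↔ a = a' ∧ b = b' ∧ c = c' := by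
  refine ⟨fun h => ⟨?_, ?_, ?_⟩, by rintro ⟨rfl, rfl, rfl⟩; rfl⟩
  · simpa [skew3] using congrFun (congrFun h 0) 1
  · simpa [skew3] using congrFun (congrFun h 0) 2
  · simpa [skew3] using congrFun (congrFun h 1) 2

theorem transpose_skew3 (a b c : ℤ) : (skew3 a b c)ᵀ = -skew3 a b c := by
  ext i j
  fin_cases i <;> fin_cases j <;> simp [skew3]

theorem eq_skew3_of_transpose_eq_neg {B : Matrix (Fin 3) (Fin 3) ℤ} (h : Bᵀ = -B) :
    B = skew3 (B 0 1) (B 0 2) (B 1 2) := by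
  have hB : ∀ i j, B j i = -B i j := fun i j => congrFun (congrFun h i) j
  ext i j
  fin_cases i <;> fin_cases j <;> simp [skew3] <;>
    linarith [hB 0 0, hB 1 1, hB 2 2, hB 0 1, hB 0 2, hB 1 2]

theorem mutB_zero_skew3 (a b c : ℤ) :
    mutB 0 (skew3 a b c) = skew3 (-a) (-b) (c + (|a| * b - a * |b|) / 2) := by
  rw [eq_skew3_of_transpose_eq_neg (transpose_mutB_of_transpose_eq_neg 0 (transpose_skew3 a b c))]
  simp [mutB, skew3, sub_eq_add_neg]

theorem mutB_one_skew3 (a b c : ℤ) :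
    mutB 1 (skew3 a b c) = skew3 (-a) (b + (|a| * c + a * |c|) / 2) (-c) := by
  rw [eq_skew3_of_transpose_eq_neg (transpose_mutB_of_transpose_eq_neg 1 (transpose_skew3 a b c))]
  simp [mutB, skew3]

theorem rhoM_three : rhoM 3 = !![0, 0, 1; 1, 0, 0; 0, 1, 0] := by decide

theorem inv_rhoM_three : (rhoM 3)⁻¹ = !![0, 1, 0; 0, 0, 1; 1, 0, 0] :=
  Matrix.inv_eq_right_inv (by decide)

theorem rhoM_three_conj_skew3 (a b c : ℤ) :
    rhoM 3 * skew3 a b c * (rhoM 3)⁻¹ = skew3 (-b) (-c) a := by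
  rw [inv_rhoM_three, rhoM_three]
  ext i j
  fin_cases i <;> fin_cases j <;> simp [skew3, Matrix.mul_apply, Fin.sum_univ_three]

theorem rhoM_three_sq_conj_skew3 (a b c : ℤ) :
    rhoM 3 ^ 2 * skew3 a b c * (rhoM 3)⁻¹ ^ 2 = skew3 c (-a) (-b) := by
  have hassoc : rhoM 3 ^ 2 * skew3 a b c * (rhoM 3)⁻¹ ^ 2
      = rhoM 3 * (rhoM 3 * skew3 a b c * (rhoM 3)⁻¹) * (rhoM 3)⁻¹ := by
    simp only [pow_two, Matrix.mul_assoc]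
  rw [hassoc, rhoM_three_conj_skew3, rhoM_three_conj_skew3, neg_neg]

/-- The only strictly period 2 skew-symmetric 3×3 integer matrices are the 3-cycle of
double arrows and its opposite. -/
theorem stmt11 (B : Matrix (Fin 3) (Fin 3) ℤ) (hskew : Bᵀ = -B)
    (hper : mutB 1 (mutB 0 B) = rhoM 3 ^ 2 * B * ((rhoM 3)⁻¹) ^ 2)
    (hstrict : mutB 0 B ≠ rhoM 3 * B * (rhoM 3)⁻¹) :
    B = !![0, -2, 2; 2, 0, -2; -2, 2, 0] ∨ B = -!![0, -2, 2; 2, 0, -2; -2, 2, 0] := by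
  obtain ⟨a, b, c, rfl⟩ : ∃ a b c, B = skew3 a b c :=
    ⟨_, _, _, eq_skew3_of_transpose_eq_neg hskew⟩
  rw [mutB_zero_skew3, mutB_one_skew3, rhoM_three_sq_conj_skew3, skew3_inj] at hper
  rw [mutB_zero_skew3, rhoM_three_conj_skew3, Ne, skew3_inj] at hstrict
  simp only [neg_neg, neg_inj] at hper hstrict
  obtain ⟨rfl, -, hcb⟩ := hper
  have hab : a ≠ b := fun hab => hstrict ⟨hab, hab.symm, by rw [hcb, hab]⟩
  have hba : b - a = (|a| * b - a * |b|) / 2 := by omega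
  rcases Int.eq_two_neg_two_of_sub_eq_half hba hab with ⟨rfl, rfl⟩ | ⟨rfl, rfl⟩
  · right; decide
  · left; decide
end

section
/- Let N ≥ 2, M ≥ 1, and let B = (b_{ij}) be an (N+M)×(N+M) skew-symmetric integer matrix with b_{N+i,N+j} = 0 for all 1 ≤ i, j ≤ M. Write m_j := b_{j+1,1} for 1 ≤ j ≤ N−1. Then μ̃₁(B) = ρ̃ B ρ̃⁻¹ if and only if both of the following hold: (1) the principal N×N submatrix B′ of B on rows and columns 1, …, N satisfies μ₁(B′) = ρ B′ ρ⁻¹; (2) for each 1 ≤ i ≤ M, either b_{N+i,j} = 0 for all 1 ≤ j ≤ N, or there exist a sign s ∈ {+1, −1}, a positive integer l, and an integer t with 1 ≤ t ≤ ⌊N/2⌋ such that: b_{N+i,j} = s·l for 1 ≤ j ≤ t, b_{N+i,j} = 0 for t+1 ≤ j ≤ N−t, and b_{N+i,j} = −s·l for N−t+1 ≤ j ≤ N; and moreover either t < N/2, s·m_t = s·m_{N−t} = −1 and s·m_j ≥ 0 for all 1 ≤ j ≤ N−1 with j ∉ {t, N−t}, or N = 2t is even, s·m_t = −2 and s·m_j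 ≥ 0 for all 1 ≤ j ≤ N−1 with j ≠ t. -/
open Matrix

/-- The modified mutation `μ̃₁` of an ice quiver matrix: mutate at node 1 and reset the
entries in the frozen block (rows and columns `N+1, …, N+M`) to 0. -/
def mutIce (N M : ℕ) (B : Matrix (Fin (N + M)) (Fin (N + M)) ℤ) :
    Matrix (Fin (N + M)) (Fin (N + M)) ℤ :=
  if h : 0 < N + M then
    Matrix.of fun i j =>
      if N ≤ (i : ℕ) ∧ N ≤ (j : ℕ) then 0 else mutB ⟨0, h⟩ B i j
  else B

/-- The block diagonal matrix `ρ̃` with blocks `ρ` (on the first `N` indices) and the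
`M×M` identity matrix. -/
def rhoTilde (N M : ℕ) : Matrix (Fin (N + M)) (Fin (N + M)) ℤ :=
  Matrix.of fun i j =>
    if (i : ℕ) < N ∧ (j : ℕ) < N then (if (i : ℕ) = ((j : ℕ) + 1) % N then 1 else 0)
    else if i = j then 1 else 0

namespace Stmt12Aux

def eta (a b : ℤ) : ℤ :=
  if 0 ≤ a then (if 0 ≤ b then 0 else a * b) else (if 0 ≤ b then -(a * b) else 0)

def eps (a b : ℤ) : ℤ := (|a| * b + a * |b|) / 2

lemma half2 (x : ℤ) : (2 * x) / 2 = x := Int.mul_ediv_cancel_left _ two_ne_zero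

lemma eps_neg_right (a b : ℤ) : eps a (-b) = - eta a b := by
  unfold eps eta
  rcases le_or_gt 0 a with ha | ha <;> rcases le_or_gt 0 b with hb | hb
  · rw [abs_of_nonneg ha, abs_neg, abs_of_nonneg hb, if_pos ha, if_pos hb,
      show a * -b + a * b = 2 * 0 by ring, half2, neg_zero]
  · rw [abs_of_nonneg ha, abs_neg, abs_of_neg hb, if_pos ha, if_neg (not_le.2 hb),
      show a * -b + a * -b = 2 * -(a*b) by ring, half2]
  · rw [abs_of_neg ha, abs_neg, abs_of_nonneg hb, if_neg (not_le.2 ha), if_pos hb,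
      show -a * -b + a * b = 2 * (a*b) by ring, half2, neg_neg]
  · rw [abs_of_neg ha, abs_neg, abs_of_neg hb, if_neg (not_le.2 ha), if_neg (not_le.2 hb),
      show -a * -b + a * -b = 2 * 0 by ring, half2, neg_zero]

lemma eta_antisymm (a b : ℤ) : eta a b = - eta b a := by
  unfold eta
  rcases le_or_gt 0 a with ha | ha <;> rcases le_or_gt 0 b with hb | hb
  · rw [if_pos ha, if_pos hb, if_pos hb, if_pos ha]; ring
  · rw [if_pos ha, if_neg (not_le.2 hb), if_neg (not_le.2 hb), if_pos ha]; ring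
  · rw [if_neg (not_le.2 ha), if_pos hb, if_pos hb, if_neg (not_le.2 ha)]; ring
  · rw [if_neg (not_le.2 ha), if_neg (not_le.2 hb), if_neg (not_le.2 hb), if_neg (not_le.2 ha)]; ring

lemma eta_self (a : ℤ) : eta a a = 0 := by
  unfold eta
  rcases le_or_gt 0 a with ha | ha <;> simp [ha, not_le.2]

lemma eta_zero_left (b : ℤ) : eta 0 b = 0 := by
  unfold eta; rcases le_or_gt 0 b with hb | hb <;> simp [hb]

lemma eta_sl (s : ℤ) (hs : s = 1 ∨ s = -1) (l : ℤ) (hl : 0 < l) (m : ℤ) :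
    eta (s * l) m = if 0 ≤ s * m then 0 else l * m := by
  unfold eta
  rcases hs with rfl | rfl
  · rcases le_or_gt 0 m with hm | hm
    · rw [if_pos (by linarith : (0:ℤ) ≤ 1 * l), if_pos hm, if_pos (by linarith : (0:ℤ) ≤ 1 * m)]
    · rw [if_pos (by linarith : (0:ℤ) ≤ 1 * l), if_neg (not_le.2 hm),
        if_neg (by simpa using not_le.2 hm : ¬ (0:ℤ) ≤ 1 * m)]
      ring
  · rcases le_or_gt 0 m with hm | hm
    · rcases eq_or_lt_of_le hm with h0 | h0
      · rw [← h0]; simp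
      · rw [if_neg (by nlinarith : ¬ (0:ℤ) ≤ -1 * l), if_pos hm,
          if_neg (by nlinarith : ¬ (0:ℤ) ≤ -1 * m)]
        ring
    · rw [if_neg (by nlinarith : ¬ (0:ℤ) ≤ -1 * l), if_neg (not_le.2 hm),
        if_pos (by nlinarith : (0:ℤ) ≤ -1 * m)]

lemma mod_succ_pred (N k : ℕ) (hN : 0 < N) (h : k < N) : ((k+1) % N + N - 1) % N = k := by
  rcases Nat.lt_or_ge (k+1) N with h1 | h1
  · rw [Nat.mod_eq_of_lt h1, show k+1+N-1 = k+N by omega, Nat.add_mod_right]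
    exact Nat.mod_eq_of_lt h
  · have hk : k + 1 = N := by omega
    rw [hk, Nat.mod_self, show 0 + N - 1 = N - 1 by omega, Nat.mod_eq_of_lt (by omega)]
    omega

lemma mod_pred_succ (N k : ℕ) (hN : 0 < N) (h : k < N) : ((k+N-1) % N + 1) % N = k := by
  rcases Nat.eq_zero_or_pos k with rfl | hk
  · rw [show 0+N-1 = N-1 by omega, Nat.mod_eq_of_lt (show N-1 < N by omega),
      show N-1+1 = N by omega, Nat.mod_self]
  · rw [show k+N-1 = (k-1)+N by omega, Nat.add_mod_right,
      Nat.mod_eq_of_lt (show k-1 < N by omega), show k-1+1 = k by omega, Nat.mod_eq_of_lt h]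

/-- the permutation of `Fin n` which rotates the first `N` indices cyclically
(`k ↦ k+1 mod N`) and fixes the rest -/
def cycPerm (n N : ℕ) (hN : 0 < N) (hn : N ≤ n) : Equiv.Perm (Fin n) where
  toFun k := ⟨if (k:ℕ) < N then ((k:ℕ)+1) % N else (k:ℕ), by
    split
    · exact lt_of_lt_of_le (Nat.mod_lt _ hN) hn
    · exact k.2⟩
  invFun k := ⟨if (k:ℕ) < N then ((k:ℕ)+N-1) % N else (k:ℕ), by
    split
    · exact lt_of_lt_of_le (Nat.mod_lt _ hN) hn
    · exact k.2⟩
  left_inv k := by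
    ext
    by_cases h : (k:ℕ) < N
    · simp only [if_pos h, if_pos (Nat.mod_lt _ hN : ((k:ℕ)+1) % N < N)]
      exact mod_succ_pred N _ hN h
    · simp only [if_neg h]
  right_inv k := by
    ext
    by_cases h : (k:ℕ) < N
    · simp only [if_pos h, if_pos (Nat.mod_lt _ hN : ((k:ℕ)+N-1) % N < N)]
      exact mod_pred_succ N _ hN h
    · simp only [if_neg h]

lemma cycPerm_apply_val (n N : ℕ) (hN : 0 < N) (hn : N ≤ n) (k : Fin n) :
    ((cycPerm n N hN hn k : Fin n) : ℕ) = if (k:ℕ) < N then ((k:ℕ)+1) % N else (k:ℕ) := rfl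

lemma cycPerm_symm_apply_val (n N : ℕ) (hN : 0 < N) (hn : N ≤ n) (k : Fin n) :
    (((cycPerm n N hN hn).symm k : Fin n) : ℕ) = if (k:ℕ) < N then ((k:ℕ)+N-1) % N else (k:ℕ) := rfl

/-- conjugation by a permutation matrix, as an entrywise condition -/
lemma conj_iff {n : ℕ} (A C : Matrix (Fin n) (Fin n) ℤ) (π : Equiv.Perm (Fin n))
    (R : Matrix (Fin n) (Fin n) ℤ) (hR : R = (π.symm.toPEquiv.toMatrix : Matrix (Fin n) (Fin n) ℤ)) :
    (A = R * C * R⁻¹) ↔ ∀ i j, A i (π j) = C (π.symm i) j := by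
  subst hR
  have h1 : (π.symm.toPEquiv.toMatrix : Matrix (Fin n) (Fin n) ℤ) * π.toPEquiv.toMatrix = 1 := by
    rw [← PEquiv.toMatrix_trans, ← Equiv.toPEquiv_trans, Equiv.symm_trans_self,
      Equiv.toPEquiv_refl, PEquiv.toMatrix_refl]
  have h2 : (π.toPEquiv.toMatrix : Matrix (Fin n) (Fin n) ℤ) * π.symm.toPEquiv.toMatrix = 1 := by
    rw [← PEquiv.toMatrix_trans, ← Equiv.toPEquiv_trans, Equiv.self_trans_symm,
      Equiv.toPEquiv_refl, PEquiv.toMatrix_refl]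
  have hinv : (π.symm.toPEquiv.toMatrix : Matrix (Fin n) (Fin n) ℤ)⁻¹ = π.toPEquiv.toMatrix :=
    Matrix.inv_eq_right_inv h1
  rw [hinv]
  constructor
  · intro h i j
    have h' : A * (Equiv.symm π).toPEquiv.toMatrix = (Equiv.symm π).toPEquiv.toMatrix * C := by
      rw [h, Matrix.mul_assoc, h2, Matrix.mul_one]
    rw [PEquiv.mul_toMatrix_toPEquiv, PEquiv.toMatrix_toPEquiv_mul] at h'
    have := congrFun (congrFun h' i) j
    simpa using this
  · intro h
    have h' : A * (Equiv.symm π).toPEquiv.toMatrix = (Equiv.symm π).toPEquiv.toMatrix * C := by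
      rw [PEquiv.mul_toMatrix_toPEquiv, PEquiv.toMatrix_toPEquiv_mul]
      ext i j
      simpa using h i j
    calc A = A * ((Equiv.symm π).toPEquiv.toMatrix * (Equiv.toPEquiv π).toMatrix) := by
          rw [h1, Matrix.mul_one]
      _ = (A * (Equiv.symm π).toPEquiv.toMatrix) * (Equiv.toPEquiv π).toMatrix := by
          rw [Matrix.mul_assoc]
      _ = (Equiv.symm π).toPEquiv.toMatrix * C * (Equiv.toPEquiv π).toMatrix := by rw [h']


lemma rhoTilde_eq (N M : ℕ) (hN : 0 < N) :
    rhoTilde N M =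
      ((cycPerm (N+M) N hN (Nat.le_add_right N M)).symm.toPEquiv.toMatrix :
        Matrix (Fin (N+M)) (Fin (N+M)) ℤ) := by
  ext i j
  set π := cycPerm (N+M) N hN (Nat.le_add_right N M) with hπ
  have hrhs : (π.symm.toPEquiv.toMatrix : Matrix (Fin (N+M)) (Fin (N+M)) ℤ) i j
      = if i = π j then 1 else 0 := by
    rw [PEquiv.toMatrix_apply, Equiv.toPEquiv_apply]
    simp only [Option.mem_some_iff]
    by_cases h : i = π j
    · rw [if_pos h, if_pos (by rw [h, Equiv.symm_apply_apply])]
    · rw [if_neg h, if_neg (fun hh => h (by rw [← hh, Equiv.apply_symm_apply]))]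
  rw [hrhs]
  have hv : ((π j : Fin (N+M)) : ℕ) = if (j:ℕ) < N then ((j:ℕ)+1) % N else (j:ℕ) := rfl
  show (if (i : ℕ) < N ∧ (j : ℕ) < N then (if (i : ℕ) = ((j : ℕ) + 1) % N then 1 else 0)
    else if i = j then (1:ℤ) else 0) = _
  by_cases hj : (j:ℕ) < N
  · by_cases hi : (i:ℕ) < N
    · rw [if_pos ⟨hi, hj⟩]
      congr 1
      rw [Fin.ext_iff, hv, if_pos hj]
    · rw [if_neg (by tauto)]
      rw [if_neg (by rw [Fin.ext_iff]; omega), if_neg (by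
        rw [Fin.ext_iff, hv, if_pos hj]
        have := Nat.mod_lt ((j:ℕ)+1) hN
        omega)]
  · rw [if_neg (by tauto)]
    congr 1
    rw [Fin.ext_iff, Fin.ext_iff, hv, if_neg hj]

lemma rhoM_eq (N : ℕ) (hN : 0 < N) :
    rhoM N = ((cycPerm N N hN le_rfl).symm.toPEquiv.toMatrix : Matrix (Fin N) (Fin N) ℤ) := by
  ext i j
  set π := cycPerm N N hN le_rfl with hπ
  have hrhs : (π.symm.toPEquiv.toMatrix : Matrix (Fin N) (Fin N) ℤ) i j
      = if i = π j then 1 else 0 := by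
    rw [PEquiv.toMatrix_apply, Equiv.toPEquiv_apply]
    simp only [Option.mem_some_iff]
    by_cases h : i = π j
    · rw [if_pos h, if_pos (by rw [h, Equiv.symm_apply_apply])]
    · rw [if_neg h, if_neg (fun hh => h (by rw [← hh, Equiv.apply_symm_apply]))]
  rw [hrhs]
  have hv : ((π j : Fin N) : ℕ) = if (j:ℕ) < N then ((j:ℕ)+1) % N else (j:ℕ) := rfl
  show (if (i : ℕ) = ((j : ℕ) + 1) % N then (1:ℤ) else 0) = _
  congr 1
  rw [Fin.ext_iff, hv, if_pos j.isLt]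

def RowRec (N : ℕ) (m c : ℕ → ℤ) : Prop :=
  (∀ k, 1 ≤ k → k ≤ N-1 → c k = c (k-1) + eta (c 0) (m k)) ∧ c (N-1) = -(c 0)

def RowClass (N : ℕ) (m c : ℕ → ℤ) : Prop :=
  (∀ j, j < N → c j = 0) ∨
  (∃ s : ℤ, (s = 1 ∨ s = -1) ∧ ∃ l : ℕ, 0 < l ∧ ∃ t : ℕ, 1 ≤ t ∧ t ≤ N/2 ∧
    (∀ j, j < N → j+1 ≤ t → c j = s*l) ∧
    (∀ j, j < N → t+1 ≤ j+1 → j+1 ≤ N-t → c j = 0) ∧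
    (∀ j, j < N → N-t+1 ≤ j+1 → c j = -(s*l)) ∧
    ((2*t < N ∧ s * m t = -1 ∧ s * m (N-t) = -1 ∧
       (∀ j, 1 ≤ j → j ≤ N-1 → j ≠ t → j ≠ N-t → 0 ≤ s * m j)) ∨
     (N = 2*t ∧ s * m t = -2 ∧ (∀ j, 1 ≤ j → j ≤ N-1 → j ≠ t → 0 ≤ s * m j))))

lemma s_sq {s : ℤ} (hs : s = 1 ∨ s = -1) : s * s = 1 := by rcases hs with rfl | rfl <;> norm_num

lemma row_backward (N : ℕ) (hN : 2 ≤ N) (m c : ℕ → ℤ) (h : RowClass N m c) : RowRec N m c := by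
  rcases h with h0 | ⟨s, hs, l, hl, t, ht1, ht2, h1, h2, h3, hbr⟩
  · constructor
    · intro k hk1 hk2
      rw [h0 k (by omega), h0 (k-1) (by omega), h0 0 (by omega), eta_zero_left]; ring
    · rw [h0 (N-1) (by omega), h0 0 (by omega)]; norm_num
  · have hlZ : (0:ℤ) < (l:ℤ) := by exact_mod_cast hl
    have hc0 : c 0 = s * l := h1 0 (by omega) (by omega)
    have heta : ∀ k, eta (c 0) (m k) = if 0 ≤ s * m k then 0 else (l:ℤ) * m k := by
      intro k; rw [hc0]; exact eta_sl s hs _ hlZ _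
    have htN : 2*t ≤ N := by omega
    constructor
    · intro k hk1 hk2
      rw [heta]
      rcases hbr with ⟨h2t, hmt, hmNt, hpos⟩ | ⟨hNt, hmt, hpos⟩
      · rcases lt_trichotomy k t with hkt | hkt | hkt
        · have e1 : c k = s*l := h1 k (by omega) (by omega)
          have e2 : c (k-1) = s*l := h1 (k-1) (by omega) (by omega)
          rw [e1, e2, if_pos (hpos k (by omega) (by omega) (by omega) (by omega))]; ring
        · rw [hkt]
          have e1 : c t = 0 := h2 t (by omega) (by omega) (by omega)
          have e2 : c (t-1) = s*l := h1 (t-1) (by omega) (by omega)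
          have hmt' : m t = -s := by rcases hs with rfl | rfl <;> omega
          rw [e1, e2, if_neg (by rw [hmt]; norm_num), hmt']; ring
        · rcases lt_trichotomy k (N-t) with hkNt | hkNt | hkNt
          · have e1 : c k = 0 := h2 k (by omega) (by omega) (by omega)
            have e2 : c (k-1) = 0 := h2 (k-1) (by omega) (by omega) (by omega)
            rw [e1, e2, if_pos (hpos k (by omega) (by omega) (by omega) (by omega))]; ring
          · rw [hkNt]
            have e1 : c (N-t) = -(s*l) := h3 (N-t) (by omega) (by omega)
            have e2 : c (N-t-1) = 0 := h2 (N-t-1) (by omega) (by omega) (by omega)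
            have hmt' : m (N-t) = -s := by rcases hs with rfl | rfl <;> omega
            rw [e1, e2, if_neg (by rw [hmNt]; norm_num), hmt']; ring
          · have e1 : c k = -(s*l) := h3 k (by omega) (by omega)
            have e2 : c (k-1) = -(s*l) := h3 (k-1) (by omega) (by omega)
            rw [e1, e2, if_pos (hpos k (by omega) (by omega) (by omega) (by omega))]; ring
      · rcases lt_trichotomy k t with hkt | hkt | hkt
        · have e1 : c k = s*l := h1 k (by omega) (by omega)
          have e2 : c (k-1) = s*l := h1 (k-1) (by omega) (by omega)
          rw [e1, e2, if_pos (hpos k (by omega) (by omega) (by omega))]; ring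
        · rw [hkt]
          have e1 : c t = -(s*l) := h3 t (by omega) (by omega)
          have e2 : c (t-1) = s*l := h1 (t-1) (by omega) (by omega)
          have hmt' : m t = -2*s := by rcases hs with rfl | rfl <;> omega
          rw [e1, e2, if_neg (by rw [hmt]; norm_num), hmt']; ring
        · have e1 : c k = -(s*l) := h3 k (by omega) (by omega)
          have e2 : c (k-1) = -(s*l) := h3 (k-1) (by omega) (by omega)
          rw [e1, e2, if_pos (hpos k (by omega) (by omega) (by omega))]; ring
    · have e1 : c (N-1) = -(s*l) := h3 (N-1) (by omega) (by omega)
      rw [e1, hc0]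


lemma row_forward (N : ℕ) (hN : 2 ≤ N) (m c : ℕ → ℤ)
    (pal : ∀ d, 1 ≤ d → d ≤ N-1 → m d = m (N-d))
    (h : RowRec N m c) : RowClass N m c := by
  obtain ⟨hrec, hend⟩ := h
  by_cases hc0 : c 0 = 0
  · left
    have key : ∀ k, k ≤ N-1 → c k = 0 := by
      intro k
      induction k with
      | zero => intro _; exact hc0
      | succ k ih =>
        intro hk
        rw [hrec (k+1) (by omega) hk, Nat.add_sub_cancel, ih (by omega), hc0, eta_zero_left]
        ring
    intro j hj; exact key j (by omega)
  · right
    set s : ℤ := if 0 ≤ c 0 then 1 else -1 with hsdef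
    have hs : s = 1 ∨ s = -1 := by rw [hsdef]; split <;> simp
    set l : ℕ := (c 0).natAbs with hldef
    have hl : 0 < l := Int.natAbs_pos.2 hc0
    have hlZ : (0:ℤ) < (l:ℤ) := by exact_mod_cast hl
    have hc0' : c 0 = s * l := by
      rw [hsdef, hldef, Int.natCast_natAbs]
      rcases le_or_gt 0 (c 0) with h0 | h0
      · rw [if_pos h0, abs_of_nonneg h0]; ring
      · rw [if_neg (not_le.2 h0), abs_of_neg h0]; ring
    set e : ℕ → ℤ := fun k => if 0 ≤ s * m k then 0 else s * m k with hedef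
    have he_nonpos : ∀ k, e k ≤ 0 := by
      intro k; rw [hedef]; dsimp only; split
      · exact le_refl 0
      · next hh => exact le_of_lt (not_le.1 hh)
    have heval : ∀ r, e r ≠ 0 → e r = s * m r := by
      intro r h; rw [hedef] at h ⊢; dsimp only at h ⊢
      by_cases hc : 0 ≤ s * m r
      · rw [if_pos hc] at h; exact absurd rfl h
      · rw [if_neg hc]
    have heta : ∀ k, s * eta (c 0) (m k) = l * e k := by
      intro k
      rw [hc0', eta_sl s hs _ hlZ, hedef]; dsimp only; split
      · ring
      · ring
    have claimA : ∀ k, k ≤ N-1 → s * c k = l * (1 + ∑ r ∈ Finset.Icc 1 k, e r) := by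
      intro k
      induction k with
      | zero =>
        intro _
        rw [show Finset.Icc 1 0 = ∅ from Finset.Icc_eq_empty (by omega), Finset.sum_empty, hc0']
        rcases hs with h' | h' <;> rw [h'] <;> ring
      | succ k ih =>
        intro hk
        rw [hrec (k+1) (by omega) hk, Nat.add_sub_cancel, mul_add, heta, ih (by omega),
          Finset.sum_Icc_succ_top (by omega : 1 ≤ k+1)]
        ring
    have hsum : ∑ r ∈ Finset.Icc 1 (N-1), e r = -2 := by
      have h1 := claimA (N-1) le_rfl
      rw [hend, hc0'] at h1
      have h2 : (l:ℤ) * (-1) = l * (1 + ∑ r ∈ Finset.Icc 1 (N-1), e r) := by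
        rw [← h1]; rcases hs with h' | h' <;> rw [h'] <;> ring
      have h3 := mul_left_cancel₀ (ne_of_gt hlZ) h2
      linarith
    set T := (Finset.Icc 1 (N-1)).filter (fun r => e r ≠ 0) with hTdef
    have hTsum : ∑ r ∈ T, e r = -2 := by
      rw [hTdef, Finset.sum_filter_ne_zero]; exact hsum
    have hTle : ∀ r ∈ T, e r ≤ -1 := by
      intro r hr
      have h1 := (Finset.mem_filter.1 hr).2
      have h2 := he_nonpos r
      omega
    have hmemT : ∀ r ∈ T, 1 ≤ r ∧ r ≤ N-1 := by
      intro r hr; exact Finset.mem_Icc.1 (Finset.mem_filter.1 hr).1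
    have hoff : ∀ r, 1 ≤ r → r ≤ N-1 → r ∉ T → e r = 0 := by
      intro r h1 h2 h3
      by_contra hne
      exact h3 (Finset.mem_filter.2 ⟨Finset.mem_Icc.2 ⟨h1, h2⟩, hne⟩)
    have hposoff : ∀ j, 1 ≤ j → j ≤ N-1 → j ∉ T → 0 ≤ s * m j := by
      intro j h1 h2 h3
      have h4 := hoff j h1 h2 h3
      rw [hedef] at h4; dsimp only at h4
      by_contra hlt
      push_neg at hlt
      rw [if_neg (not_le.2 hlt)] at h4
      exact absurd h4 (ne_of_lt hlt)
    have hepal : ∀ r, 1 ≤ r → r ≤ N-1 → e (N-r) = e r := by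
      intro r h1 h2
      rw [hedef]; dsimp only; rw [← pal r h1 h2]
    have hTcard : T.card ≤ 2 := by
      by_contra hcard
      push_neg at hcard
      have h1 : ∑ r ∈ T, e r ≤ ∑ _r ∈ T, (-1 : ℤ) := Finset.sum_le_sum hTle
      rw [Finset.sum_const, hTsum] at h1
      have h2 : (3:ℤ) ≤ (T.card : ℤ) := by exact_mod_cast hcard
      have h3 : (T.card : ℤ) • (-1 : ℤ) = -(T.card : ℤ) := by simp
      simp only [nsmul_eq_mul] at h1
      linarith
    have hTne : T.Nonempty := by
      by_contra h
      rw [Finset.not_nonempty_iff_eq_empty] at h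
      rw [h, Finset.sum_empty] at hTsum
      norm_num at hTsum
    have hTc12 : T.card = 1 ∨ T.card = 2 := by
      have := Finset.card_pos.2 hTne
      omega
    -- helper to finish given the partial-sum description
    rcases hTc12 with h1 | h2
    · -- single element of weight -2
      obtain ⟨t, hTt⟩ := Finset.card_eq_one.1 h1
      have ht_mem : t ∈ T := by rw [hTt]; exact Finset.mem_singleton_self t
      obtain ⟨htr1, htr2⟩ := hmemT t ht_mem
      have het : e t = -2 := by rw [hTt, Finset.sum_singleton] at hTsum; exact hTsum
      have hNt_mem : (N - t) ∈ T := by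
        refine Finset.mem_filter.2 ⟨Finset.mem_Icc.2 ⟨by omega, by omega⟩, ?_⟩
        rw [hepal t htr1 htr2, het]; norm_num
      have hNt : N - t = t := Finset.mem_singleton.1 (by rw [← hTt]; exact hNt_mem)
      have hN2t : N = 2*t := by omega
      have hpart : ∀ j, j ≤ N-1 → ∑ r ∈ Finset.Icc 1 j, e r = if t ≤ j then -2 else 0 := by
        intro j hj
        by_cases hjt : t ≤ j
        · rw [if_pos hjt,
            Finset.sum_eq_single_of_mem t (Finset.mem_Icc.2 ⟨htr1, hjt⟩) (fun r hr hrt => by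
              obtain ⟨hr1, hr2⟩ := Finset.mem_Icc.1 hr
              exact hoff r hr1 (by omega) (by rw [hTt]; simp [hrt]))]
          exact het
        · rw [if_neg hjt]
          apply Finset.sum_eq_zero
          intro r hr
          obtain ⟨hr1, hr2⟩ := Finset.mem_Icc.1 hr
          exact hoff r hr1 (by omega) (by rw [hTt]; simp; omega)
      have hval : ∀ j, j ≤ N-1 → c j = s * ((l:ℤ) * (1 + if t ≤ j then -2 else 0)) := by
        intro j hj
        have h1 := claimA j hj
        rw [hpart j hj] at h1
        calc c j = s * (s * c j) := by rcases hs with h' | h' <;> rw [h'] <;> ring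
        _ = _ := by rw [h1]
      refine ⟨s, hs, l, hl, t, htr1, by omega, ?_, ?_, ?_, Or.inr ⟨hN2t, ?_, ?_⟩⟩
      · intro j hjN hjt
        rw [hval j (by omega), if_neg (by omega)]; ring
      · intro j hjN hj1 hj2
        omega
      · intro j hjN hj
        rw [hval j (by omega), if_pos (by omega)]; ring
      · rw [← heval t (by rw [het]; norm_num)]; exact het
      · intro j hj1 hj2 hjt
        exact hposoff j hj1 hj2 (by rw [hTt]; simp [hjt])
    · -- two elements each of weight -1
      obtain ⟨a, b, hab, hTab⟩ := Finset.card_eq_two.1 h2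
      obtain ⟨t1, t2, hlt, hTt⟩ : ∃ t1 t2, t1 < t2 ∧ T = {t1, t2} := by
        rcases lt_or_gt_of_ne hab with h' | h'
        · exact ⟨a, b, h', hTab⟩
        · exact ⟨b, a, h', by rw [hTab, Finset.pair_comm]⟩
      have h1mem : t1 ∈ T := by rw [hTt]; exact Finset.mem_insert_self _ _
      have h2mem : t2 ∈ T := by rw [hTt]; exact Finset.mem_insert_of_mem (Finset.mem_singleton_self _)
      obtain ⟨h1r1, h1r2⟩ := hmemT t1 h1mem
      obtain ⟨h2r1, h2r2⟩ := hmemT t2 h2mem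
      have hsum2 : e t1 + e t2 = -2 := by
        rw [hTt, Finset.sum_pair (ne_of_lt hlt)] at hTsum; exact hTsum
      have he1 : e t1 = -1 := by have := hTle t1 h1mem; have := hTle t2 h2mem; omega
      have he2 : e t2 = -1 := by have := hTle t1 h1mem; omega
      have hNt1_mem : (N - t1) ∈ T := by
        refine Finset.mem_filter.2 ⟨Finset.mem_Icc.2 ⟨by omega, by omega⟩, ?_⟩
        rw [hepal t1 h1r1 h1r2, he1]; norm_num
      have hNt2_mem : (N - t2) ∈ T := by
        refine Finset.mem_filter.2 ⟨Finset.mem_Icc.2 ⟨by omega, by omega⟩, ?_⟩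
        rw [hepal t2 h2r1 h2r2, he2]; norm_num
      have hNt : N - t1 = t2 := by
        rw [hTt, Finset.mem_insert, Finset.mem_singleton] at hNt1_mem hNt2_mem
        omega
      have h2t : 2 * t1 < N := by omega
      have hpart : ∀ j, j ≤ N-1 →
          ∑ r ∈ Finset.Icc 1 j, e r = if t2 ≤ j then -2 else if t1 ≤ j then -1 else 0 := by
        intro j hj
        by_cases hj2 : t2 ≤ j
        · rw [if_pos hj2, ← hTsum]
          refine (Finset.sum_subset ?_ ?_).symm
          · intro x hx
            rw [hTt, Finset.mem_insert, Finset.mem_singleton] at hx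
            refine Finset.mem_Icc.2 ⟨by omega, by omega⟩
          · intro x hx hxT
            obtain ⟨hx1, hx2⟩ := Finset.mem_Icc.1 hx
            exact hoff x hx1 (by omega) hxT
        · by_cases hj1 : t1 ≤ j
          · rw [if_neg hj2, if_pos hj1,
              Finset.sum_eq_single_of_mem t1 (Finset.mem_Icc.2 ⟨h1r1, hj1⟩) (fun r hr hrt => by
                obtain ⟨hr1, hr2⟩ := Finset.mem_Icc.1 hr
                exact hoff r hr1 (by omega) (by rw [hTt]; simp [hrt]; omega))]
            exact he1
          · rw [if_neg hj2, if_neg hj1]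
            apply Finset.sum_eq_zero
            intro r hr
            obtain ⟨hr1, hr2⟩ := Finset.mem_Icc.1 hr
            exact hoff r hr1 (by omega) (by rw [hTt]; simp; omega)
      have hval : ∀ j, j ≤ N-1 →
          c j = s * ((l:ℤ) * (1 + if t2 ≤ j then -2 else if t1 ≤ j then -1 else 0)) := by
        intro j hj
        have h1 := claimA j hj
        rw [hpart j hj] at h1
        calc c j = s * (s * c j) := by rcases hs with h' | h' <;> rw [h'] <;> ring
        _ = _ := by rw [h1]
      refine ⟨s, hs, l, hl, t1, h1r1, by omega, ?_, ?_, ?_, Or.inl ⟨h2t, ?_, ?_, ?_⟩⟩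
      · intro j hjN hjt
        rw [hval j (by omega), if_neg (by omega), if_neg (by omega)]; ring
      · intro j hjN hj1 hj2
        rw [hval j (by omega), if_neg (by omega), if_pos (by omega)]; ring
      · intro j hjN hj
        rw [hval j (by omega), if_pos (by omega)]; ring
      · rw [← heval t1 (by rw [he1]; norm_num)]; exact he1
      · rw [hNt, ← heval t2 (by rw [he2]; norm_num)]; exact he2
      · intro j hj1 hj2 hjt hjNt
        refine hposoff j hj1 hj2 ?_
        rw [hTt, Finset.mem_insert, Finset.mem_singleton]
        omega

lemma pal_of_period (N : ℕ) (hN : 2 ≤ N) (m : ℕ → ℤ) (b : ℕ → ℕ → ℤ)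
    (hb0 : ∀ d, 1 ≤ d → d ≤ N-1 → b d 0 = m d)
    (hbN : ∀ j, j ≤ N-2 → b (N-1) j = m (j+1))
    (hstep : ∀ i j, 1 ≤ i → i ≤ N-1 → j+1 ≤ N-1 → b i (j+1) = b (i-1) j + eta (m i) (m (j+1))) :
    ∀ d, 1 ≤ d → d ≤ N-1 → m d = m (N-d) := by
  have tel : ∀ d, 1 ≤ d → d ≤ N-1 → ∀ r, d + r ≤ N-1 →
      b (d+r) r = m d + ∑ k ∈ Finset.Icc 1 r, eta (m (d+k)) (m k) := by
    intro d hd1 hd2 r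
    induction r with
    | zero =>
      intro _
      rw [Nat.add_zero, hb0 d hd1 hd2, show Finset.Icc 1 0 = ∅ from Finset.Icc_eq_empty (by omega),
        Finset.sum_empty, add_zero]
    | succ r ih =>
      intro hr
      have h1 : b (d+(r+1)) (r+1) = b (d+r) r + eta (m (d+(r+1))) (m (r+1)) := by
        have h2 := hstep (d+r+1) r (by omega) (by omega) (by omega)
        rw [show d+r+1-1 = d+r by omega] at h2
        rw [show d+(r+1) = d+r+1 by omega]
        exact h2
      rw [h1, ih (by omega), Finset.sum_Icc_succ_top (by omega : 1 ≤ r+1)]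
      ring
  have ID : ∀ d, 1 ≤ d → d ≤ N-1 →
      m (N-d) = m d + ∑ k ∈ Finset.Icc 1 (N-1-d), eta (m (d+k)) (m k) := by
    intro d hd1 hd2
    have h1 := tel d hd1 hd2 (N-1-d) (by omega)
    rw [show d + (N-1-d) = N-1 by omega] at h1
    rw [← h1, hbN (N-1-d) (by omega), show N-1-d+1 = N-d by omega]
  have main : ∀ R d, 1 ≤ d → d ≤ N-1 → N-1-d ≤ R → m d = m (N-d) := by
    intro R
    induction R with
    | zero =>
      intro d h1 h2 h3
      have hd : d = N-1 := by omega
      subst hd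
      have h4 := ID (N-1) (by omega) le_rfl
      rw [show Finset.Icc 1 (N-1-(N-1)) = ∅ from Finset.Icc_eq_empty (by omega),
        Finset.sum_empty, add_zero] at h4
      exact h4.symm
    | succ R ih =>
      intro d h1 h2 h3
      by_cases hR : N-1-d ≤ R
      · exact ih d h1 h2 hR
      · have hID := ID d h1 h2
        have hcongr : ∑ k ∈ Finset.Icc 1 (N-1-d), eta (m (d+k)) (m k)
            = ∑ k ∈ Finset.Icc 1 (N-1-d), eta (m (N-d-k)) (m k) := by
          apply Finset.sum_congr rfl
          intro k hk
          obtain ⟨hk1, hk2⟩ := Finset.mem_Icc.1 hk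
          rw [ih (d+k) (by omega) (by omega) (by omega), show N-(d+k) = N-d-k by omega]
        have hzero : ∑ k ∈ Finset.Icc 1 (N-1-d), eta (m (N-d-k)) (m k) = 0 := by
          apply Finset.sum_involution (g := fun k _ => N-d-k)
          · intro k hk
            obtain ⟨hk1, hk2⟩ := Finset.mem_Icc.1 hk
            rw [show N-d-(N-d-k) = k by omega, eta_antisymm (m k) (m (N-d-k))]
            ring
          · intro k hk hne
            obtain ⟨hk1, hk2⟩ := Finset.mem_Icc.1 hk
            intro heq
            exact hne (by rw [heq, eta_self])
          · intro k hk
            obtain ⟨hk1, hk2⟩ := Finset.mem_Icc.1 hk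
            exact Finset.mem_Icc.2 ⟨by omega, by omega⟩
          · intro k hk
            obtain ⟨hk1, hk2⟩ := Finset.mem_Icc.1 hk
            omega
        rw [hcongr, hzero, add_zero] at hID
        exact hID.symm
  intro d h1 h2
  exact main (N-1-d) d h1 h2 le_rfl
def IceCond (N M : ℕ) (bb : ℕ → ℕ → ℤ) : Prop :=
  ∀ i j : ℕ, i < N+M → j < N+M →
    (if N ≤ i ∧ N ≤ (if j < N then (j+1)%N else j) then (0:ℤ) else
      if i = 0 ∨ (if j < N then (j+1)%N else j) = 0 then
        -(bb i (if j < N then (j+1)%N else j)) else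
        bb i (if j < N then (j+1)%N else j) + eps (bb i 0) (bb 0 (if j < N then (j+1)%N else j)))
    = bb (if i < N then (i+N-1)%N else i) j

def SmallCond (N : ℕ) (bb : ℕ → ℕ → ℤ) : Prop :=
  ∀ i j : ℕ, i < N → j < N →
    (if i = 0 ∨ ((j+1)%N) = 0 then -(bb i ((j+1)%N)) else
      bb i ((j+1)%N) + eps (bb i 0) (bb 0 ((j+1)%N)))
    = bb ((i+N-1)%N) j

lemma smallcond_pal (N : ℕ) (hN : 2 ≤ N) (bb : ℕ → ℕ → ℤ) (mf : ℕ → ℤ)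
    (hskew : ∀ i j, i < N → j < N → bb j i = -(bb i j))
    (hm : ∀ k, 1 ≤ k → k ≤ N-1 → bb k 0 = mf k)
    (hS : SmallCond N bb) :
    ∀ d, 1 ≤ d → d ≤ N-1 → mf d = mf (N-d) := by
  apply pal_of_period N hN mf bb hm
  · intro j hj
    have h := hS 0 j (by omega) (by omega)
    rw [Nat.mod_eq_of_lt (show j+1 < N by omega), if_pos (Or.inl rfl),
      show 0+N-1 = N-1 by omega, Nat.mod_eq_of_lt (show N-1 < N by omega)] at h
    have h0 : bb 0 (j+1) = -(mf (j+1)) := by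
      rw [hskew (j+1) 0 (by omega) (by omega), hm (j+1) (by omega) (by omega)]
    rw [h0] at h
    linarith [h]
  · intro i j hi1 hi2 hj
    have h := hS i j (by omega) (by omega)
    rw [Nat.mod_eq_of_lt (show j+1 < N by omega),
      if_neg (show ¬(i = 0 ∨ j+1 = 0) by omega),
      show (i+N-1)%N = i-1 from (by
        rw [show i+N-1 = (i-1)+N by omega, Nat.add_mod_right]
        exact Nat.mod_eq_of_lt (by omega))] at h
    have h0 : bb 0 (j+1) = -(mf (j+1)) := by
      rw [hskew (j+1) 0 (by omega) (by omega), hm (j+1) (by omega) (by omega)]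
    have h4 : bb i 0 = mf i := hm i (by omega) (by omega)
    rw [h0, h4, eps_neg_right] at h
    linarith [h]

lemma ice_iff (N M : ℕ) (hN : 2 ≤ N) (bb : ℕ → ℕ → ℤ) (mf : ℕ → ℤ)
    (hskew : ∀ i j, i < N+M → j < N+M → bb j i = -(bb i j))
    (hfrozen : ∀ i j, N ≤ i → i < N+M → N ≤ j → j < N+M → bb i j = 0)
    (hm : ∀ k, 1 ≤ k → k ≤ N-1 → bb k 0 = mf k) :
    IceCond N M bb ↔ (SmallCond N bb ∧ ∀ f, f < M → RowRec N mf (fun k => bb (N+f) k)) := by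
  constructor
  · intro hE
    constructor
    · intro i j hi hj
      have h := hE i j (by omega) (by omega)
      rw [if_pos hj, if_neg (fun hc => absurd hc.1 (by omega)), if_pos hi] at h
      exact h
    · intro f hf
      constructor
      · intro k hk1 hk2
        have h := hE (N+f) (k-1) (by omega) (by omega)
        rw [if_pos (show k-1 < N by omega), show k-1+1 = k by omega,
          Nat.mod_eq_of_lt (show k < N by omega),
          if_neg (show ¬(N ≤ N+f ∧ N ≤ k) by omega),
          if_neg (show ¬(N+f = 0 ∨ k = 0) by omega),
          if_neg (show ¬(N+f < N) by omega)] at h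
        have h0k : bb 0 k = -(mf k) := by
          rw [hskew k 0 (by omega) (by omega), hm k hk1 hk2]
        rw [h0k, eps_neg_right] at h
        dsimp only
        linarith [h]
      · have h := hE (N+f) (N-1) (by omega) (by omega)
        rw [if_pos (show N-1 < N by omega), show N-1+1 = N by omega, Nat.mod_self,
          if_neg (show ¬(N ≤ N+f ∧ N ≤ 0) by omega),
          if_pos (Or.inr rfl),
          if_neg (show ¬(N+f < N) by omega)] at h
        dsimp only
        linarith [h]
  · rintro ⟨hS, hR⟩
    intro i j hi hj
    by_cases hiN : i < N
    · by_cases hjN : j < N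
      · have h := hS i j hiN hjN
        rw [if_pos hjN, if_neg (fun hc => absurd hc.1 (by omega)), if_pos hiN]
        exact h
      · rw [if_neg hjN, if_neg (show ¬(N ≤ i ∧ N ≤ j) by omega), if_pos hiN]
        obtain ⟨hrec, hend⟩ := hR (j-N) (by omega)
        dsimp only at hrec hend
        rw [show N+(j-N) = j by omega] at hrec hend
        by_cases hi0 : i = 0
        · subst hi0
          rw [if_pos (Or.inl rfl), show (0+N-1)%N = N-1 from (by
            rw [show 0+N-1 = N-1 by omega]; exact Nat.mod_eq_of_lt (by omega))]
          have h1 := hskew j (N-1) (by omega) (by omega)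
          have h2 := hskew j 0 (by omega) (by omega)
          linarith [h1, h2, hend]
        · rw [if_neg (show ¬(i = 0 ∨ j = 0) by omega),
            show (i+N-1)%N = i-1 from (by
              rw [show i+N-1 = (i-1)+N by omega, Nat.add_mod_right]
              exact Nat.mod_eq_of_lt (by omega))]
          have hr := hrec i (by omega) (by omega)
          have h1 := hskew j i (by omega) (by omega)
          have h2 := hskew j (i-1) (by omega) (by omega)
          have h3 := hskew j 0 (by omega) (by omega)
          have h4 : bb i 0 = mf i := hm i (by omega) (by omega)
          rw [h4, show bb 0 j = -(bb j 0) from h3, eps_neg_right]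
          have h5 := eta_antisymm (mf i) (bb j 0)
          have h6 := eta_antisymm (bb j 0) (mf i)
          linarith [hr, h1, h2, h5, h6]
    · by_cases hjN : j < N
      · obtain ⟨hrec, hend⟩ := hR (i-N) (by omega)
        dsimp only at hrec hend
        rw [show N+(i-N) = i by omega] at hrec hend
        rw [if_pos hjN, if_neg hiN]
        by_cases hj1 : j = N-1
        · subst hj1
          rw [show N-1+1 = N by omega, Nat.mod_self,
            if_neg (show ¬(N ≤ i ∧ N ≤ 0) by omega), if_pos (Or.inr rfl)]
          linarith [hend]
        · rw [Nat.mod_eq_of_lt (show j+1 < N by omega),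
            if_neg (show ¬(N ≤ i ∧ N ≤ j+1) by omega),
            if_neg (show ¬(i = 0 ∨ j+1 = 0) by omega)]
          have hr := hrec (j+1) (by omega) (by omega)
          rw [Nat.add_sub_cancel] at hr
          have h0 : bb 0 (j+1) = -(mf (j+1)) := by
            rw [hskew (j+1) 0 (by omega) (by omega), hm (j+1) (by omega) (by omega)]
          rw [h0, eps_neg_right]
          linarith [hr]
      · rw [if_neg hjN, if_pos ⟨by omega, by omega⟩, if_neg hiN]
        exact (hfrozen i j (by omega) hi (by omega) hj).symm
end Stmt12Aux

/-- Classification of period 1 ice quivers (Theorem on periodic ice quivers):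
`μ̃₁(B) = ρ̃ B ρ̃⁻¹` iff the principal `N×N` submatrix is a period 1 quiver and each
frozen row is either zero or of the prescribed form. -/
theorem stmt12 (N M : ℕ) (hN : 2 ≤ N) (hM : 1 ≤ M)
    (B : Matrix (Fin (N + M)) (Fin (N + M)) ℤ) (hskew : Bᵀ = -B)
    (hfrozen : ∀ i j : Fin M, B (Fin.natAdd N i) (Fin.natAdd N j) = 0)
    (mf : ℕ → ℤ)
    (hmf : ∀ j (h1 : 1 ≤ j) (h2 : j ≤ N - 1),
      mf j = B (Fin.castAdd M ⟨j, by omega⟩) (Fin.castAdd M ⟨0, by omega⟩)) :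
    mutIce N M B = rhoTilde N M * B * (rhoTilde N M)⁻¹ ↔
      (mutB ⟨0, by omega⟩ (B.submatrix (Fin.castAdd M) (Fin.castAdd M))
          = rhoM N * B.submatrix (Fin.castAdd M) (Fin.castAdd M) * (rhoM N)⁻¹) ∧
      (∀ i : Fin M,
        (∀ j : Fin N, B (Fin.natAdd N i) (Fin.castAdd M j) = 0) ∨
        (∃ s : ℤ, (s = 1 ∨ s = -1) ∧ ∃ l : ℕ, 0 < l ∧ ∃ t : ℕ, 1 ≤ t ∧ t ≤ N / 2 ∧
          (∀ j : Fin N, (j : ℕ) + 1 ≤ t →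
            B (Fin.natAdd N i) (Fin.castAdd M j) = s * l) ∧
          (∀ j : Fin N, t + 1 ≤ (j : ℕ) + 1 → (j : ℕ) + 1 ≤ N - t →
            B (Fin.natAdd N i) (Fin.castAdd M j) = 0) ∧
          (∀ j : Fin N, N - t + 1 ≤ (j : ℕ) + 1 →
            B (Fin.natAdd N i) (Fin.castAdd M j) = -(s * l)) ∧
          ((2 * t < N ∧ s * mf t = -1 ∧ s * mf (N - t) = -1 ∧
             (∀ j, 1 ≤ j → j ≤ N - 1 → j ≠ t → j ≠ N - t → 0 ≤ s * mf j)) ∨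
           (N = 2 * t ∧ s * mf t = -2 ∧
             (∀ j, 1 ≤ j → j ≤ N - 1 → j ≠ t → 0 ≤ s * mf j))))) := by
  classical
  have hN0 : 0 < N := by omega
  have hNM : 0 < N + M := by omega
  -- ℕ-indexed entry function
  set bb : ℕ → ℕ → ℤ := fun i j => if h : i < N+M ∧ j < N+M then B ⟨i, h.1⟩ ⟨j, h.2⟩ else 0
    with hbbdef
  have hbb : ∀ a b : Fin (N+M), B a b = bb (a:ℕ) (b:ℕ) := by
    intro a b
    have h1 : bb (a:ℕ) (b:ℕ)
        = if h : (a:ℕ) < N+M ∧ (b:ℕ) < N+M then B ⟨(a:ℕ), h.1⟩ ⟨(b:ℕ), h.2⟩ else 0 := by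
      rw [hbbdef]
    rw [h1, dif_pos (⟨a.isLt, b.isLt⟩ : (a:ℕ) < N+M ∧ (b:ℕ) < N+M)]
  have hskew' : ∀ a b : Fin (N+M), B b a = -(B a b) := by
    intro a b
    have h1 := congrFun (congrFun hskew a) b
    simpa using h1
  have hskew'' : ∀ i j, i < N+M → j < N+M → bb j i = -(bb i j) := by
    intro i j hi hj
    have h1 := hskew' ⟨i, hi⟩ ⟨j, hj⟩
    rw [(hbb ⟨j,hj⟩ ⟨i,hi⟩ : B ⟨j,hj⟩ ⟨i,hi⟩ = bb j i),
      (hbb ⟨i,hi⟩ ⟨j,hj⟩ : B ⟨i,hi⟩ ⟨j,hj⟩ = bb i j)] at h1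
    exact h1
  have hkey : ∀ (a b : Fin (N+M)) (i j : ℕ), (a:ℕ) = i → (b:ℕ) = j → bb i j = B a b := by
    intro a b i j hi hj
    subst hi
    subst hj
    exact (hbb a b).symm
  have hfrozen'' : ∀ i j, N ≤ i → i < N+M → N ≤ j → j < N+M → bb i j = 0 := by
    intro i j hi1 hi2 hj1 hj2
    rw [hkey (Fin.natAdd N ⟨i-N, by omega⟩) (Fin.natAdd N ⟨j-N, by omega⟩) i j
      (by simp only [Fin.coe_natAdd]; omega) (by simp only [Fin.coe_natAdd]; omega)]
    exact hfrozen ⟨i-N, by omega⟩ ⟨j-N, by omega⟩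
  have hm'' : ∀ k, 1 ≤ k → k ≤ N-1 → bb k 0 = mf k := by
    intro k h1 h2
    have h3 := hmf k h1 h2
    rw [(hbb _ _ : B (Fin.castAdd M ⟨k, by omega⟩) (Fin.castAdd M ⟨0, by omega⟩)
        = bb k 0)] at h3
    exact h3.symm
  set π := Stmt12Aux.cycPerm (N+M) N hN0 (Nat.le_add_right N M) with hπdef
  set σ := Stmt12Aux.cycPerm N N hN0 le_rfl with hσdef
  set B' := B.submatrix (Fin.castAdd M) (Fin.castAdd M) with hB'def
  have hbb' : ∀ a b : Fin N, B' a b = bb (a:ℕ) (b:ℕ) := by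
    intro a b
    exact (hbb (Fin.castAdd M a) (Fin.castAdd M b) :
      B (Fin.castAdd M a) (Fin.castAdd M b) = bb (a:ℕ) (b:ℕ))
  have hπv : ∀ k : Fin (N+M), ((π k : Fin (N+M)) : ℕ)
      = if (k:ℕ) < N then ((k:ℕ)+1) % N else (k:ℕ) := fun _ => rfl
  have hπv' : ∀ k : Fin (N+M), ((π.symm k : Fin (N+M)) : ℕ)
      = if (k:ℕ) < N then ((k:ℕ)+N-1) % N else (k:ℕ) := fun _ => rfl
  have hσv : ∀ k : Fin N, ((σ k : Fin N) : ℕ) = ((k:ℕ)+1) % N := by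
    intro k
    show (if (k:ℕ) < N then ((k:ℕ)+1) % N else (k:ℕ)) = _
    rw [if_pos k.isLt]
  have hσv' : ∀ k : Fin N, ((σ.symm k : Fin N) : ℕ) = ((k:ℕ)+N-1) % N := by
    intro k
    show (if (k:ℕ) < N then ((k:ℕ)+N-1) % N else (k:ℕ)) = _
    rw [if_pos k.isLt]
  -- entrywise formula for mutIce
  have hIce0 : mutIce N M B = Matrix.of fun (i j : Fin (N+M)) =>
      if N ≤ (i:ℕ) ∧ N ≤ (j:ℕ) then 0 else mutB ⟨0, hNM⟩ B i j :=
    (dif_pos hNM : _ = Matrix.of fun (i j : Fin (N+M)) =>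
      if N ≤ (i:ℕ) ∧ N ≤ (j:ℕ) then (0:ℤ) else mutB ⟨0, hNM⟩ B i j)
  have hIceE : ∀ i j : Fin (N+M), mutIce N M B i j =
      (if N ≤ (i:ℕ) ∧ N ≤ (j:ℕ) then (0:ℤ) else
        if (i:ℕ) = 0 ∨ (j:ℕ) = 0 then -(bb (i:ℕ) (j:ℕ)) else
          bb (i:ℕ) (j:ℕ) + Stmt12Aux.eps (bb (i:ℕ) 0) (bb 0 (j:ℕ))) := by
    intro i j
    rw [hIce0]
    show (if N ≤ (i:ℕ) ∧ N ≤ (j:ℕ) then (0:ℤ) else mutB ⟨0, hNM⟩ B i j) = _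
    by_cases h : N ≤ (i:ℕ) ∧ N ≤ (j:ℕ)
    · rw [if_pos h, if_pos h]
    · rw [if_neg h, if_neg h]
      show (if i = ⟨0, hNM⟩ ∨ j = ⟨0, hNM⟩ then -(B i j) else
          B i j + Stmt12Aux.eps (B i ⟨0, hNM⟩) (B ⟨0, hNM⟩ j)) = _
      by_cases h0 : (i:ℕ) = 0 ∨ (j:ℕ) = 0
      · rw [if_pos (by
          rcases h0 with h0 | h0
          · exact Or.inl (Fin.ext h0)
          · exact Or.inr (Fin.ext h0)), if_pos h0, hbb i j]
      · rw [if_neg (by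
          rintro (hh | hh)
          · exact h0 (Or.inl (by rw [hh]))
          · exact h0 (Or.inr (by rw [hh]))), if_neg h0, hbb i j,
          (hbb i ⟨0, hNM⟩ : B i ⟨0, hNM⟩ = bb (i:ℕ) 0),
          (hbb ⟨0, hNM⟩ j : B ⟨0, hNM⟩ j = bb 0 (j:ℕ))]
  -- entrywise formula for the small mutation
  have hMutS : ∀ a b : Fin N, mutB ⟨0, hN0⟩ B' a b =
      (if (a:ℕ) = 0 ∨ (b:ℕ) = 0 then -(bb (a:ℕ) (b:ℕ)) else
        bb (a:ℕ) (b:ℕ) + Stmt12Aux.eps (bb (a:ℕ) 0) (bb 0 (b:ℕ))) := by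
    intro a b
    show (if a = ⟨0, hN0⟩ ∨ b = ⟨0, hN0⟩ then -(B' a b) else
        B' a b + Stmt12Aux.eps (B' a ⟨0, hN0⟩) (B' ⟨0, hN0⟩ b)) = _
    by_cases h0 : (a:ℕ) = 0 ∨ (b:ℕ) = 0
    · rw [if_pos (by
        rcases h0 with h0 | h0
        · exact Or.inl (Fin.ext h0)
        · exact Or.inr (Fin.ext h0)), if_pos h0, hbb' a b]
    · rw [if_neg (by
        rintro (hh | hh)
        · exact h0 (Or.inl (by rw [hh]))
        · exact h0 (Or.inr (by rw [hh]))), if_neg h0, hbb' a b,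
        (hbb' a ⟨0, hN0⟩ : B' a ⟨0, hN0⟩ = bb (a:ℕ) 0),
        (hbb' ⟨0, hN0⟩ b : B' ⟨0, hN0⟩ b = bb 0 (b:ℕ))]
  have bigIff := Stmt12Aux.conj_iff (mutIce N M B) B π (rhoTilde N M)
    (Stmt12Aux.rhoTilde_eq N M hN0)
  have smallIff := Stmt12Aux.conj_iff (mutB ⟨0, hN0⟩ B') B' σ (rhoM N)
    (Stmt12Aux.rhoM_eq N hN0)
  have step1 : (∀ i j, mutIce N M B i (π j) = B (π.symm i) j) ↔ Stmt12Aux.IceCond N M bb := by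
    constructor
    · intro h i j hi hj
      have h2 := h ⟨i, hi⟩ ⟨j, hj⟩
      rw [hIceE, hbb] at h2
      simp only [hπv, hπv'] at h2
      exact h2
    · intro h i j
      rw [hIceE, hbb]
      simp only [hπv, hπv']
      exact h (i:ℕ) (j:ℕ) i.isLt j.isLt
  have step3 : (mutB ⟨0, hN0⟩ B' = rhoM N * B' * (rhoM N)⁻¹) ↔ Stmt12Aux.SmallCond N bb := by
    rw [smallIff]
    constructor
    · intro h i j hi hj
      have h2 := h ⟨i, hi⟩ ⟨j, hj⟩
      rw [hMutS, hbb'] at h2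
      simp only [hσv, hσv'] at h2
      exact h2
    · intro h i j
      rw [hMutS, hbb']
      simp only [hσv, hσv']
      exact h (i:ℕ) (j:ℕ) i.isLt j.isLt
  have hent : ∀ (f : Fin M) (j : Fin N),
      B (Fin.natAdd N f) (Fin.castAdd M j) = bb (N+(f:ℕ)) (j:ℕ) := by
    intro f j
    exact (hbb (Fin.natAdd N f) (Fin.castAdd M j) :
      B (Fin.natAdd N f) (Fin.castAdd M j) = bb (N+(f:ℕ)) (j:ℕ))
  have rowTrans : ∀ f : Fin M,
      (((∀ j : Fin N, B (Fin.natAdd N f) (Fin.castAdd M j) = 0) ∨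
        (∃ s : ℤ, (s = 1 ∨ s = -1) ∧ ∃ l : ℕ, 0 < l ∧ ∃ t : ℕ, 1 ≤ t ∧ t ≤ N / 2 ∧
          (∀ j : Fin N, (j : ℕ) + 1 ≤ t →
            B (Fin.natAdd N f) (Fin.castAdd M j) = s * l) ∧
          (∀ j : Fin N, t + 1 ≤ (j : ℕ) + 1 → (j : ℕ) + 1 ≤ N - t →
            B (Fin.natAdd N f) (Fin.castAdd M j) = 0) ∧
          (∀ j : Fin N, N - t + 1 ≤ (j : ℕ) + 1 →
            B (Fin.natAdd N f) (Fin.castAdd M j) = -(s * l)) ∧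
          ((2 * t < N ∧ s * mf t = -1 ∧ s * mf (N - t) = -1 ∧
             (∀ j, 1 ≤ j → j ≤ N - 1 → j ≠ t → j ≠ N - t → 0 ≤ s * mf j)) ∨
           (N = 2 * t ∧ s * mf t = -2 ∧
             (∀ j, 1 ≤ j → j ≤ N - 1 → j ≠ t → 0 ≤ s * mf j))))) ↔
        Stmt12Aux.RowClass N mf (fun k => bb (N+(f:ℕ)) k)) := by
    intro f
    constructor
    · rintro (h0 | ⟨s, hs, l, hl, t, ht1, ht2, h1, h2, h3, hbr⟩)
      · left
        intro j hj
        have h1 := h0 ⟨j, hj⟩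
        rw [hent f ⟨j, hj⟩] at h1
        exact h1
      · right
        refine ⟨s, hs, l, hl, t, ht1, ht2, ?_, ?_, ?_, hbr⟩
        · intro j hj hjt
          have h4 := h1 ⟨j, hj⟩ hjt
          rw [hent f ⟨j, hj⟩] at h4
          exact h4
        · intro j hj hjt1 hjt2
          have h4 := h2 ⟨j, hj⟩ hjt1 hjt2
          rw [hent f ⟨j, hj⟩] at h4
          exact h4
        · intro j hj hjt
          have h4 := h3 ⟨j, hj⟩ hjt
          rw [hent f ⟨j, hj⟩] at h4
          exact h4
    · rintro (h0 | ⟨s, hs, l, hl, t, ht1, ht2, h1, h2, h3, hbr⟩)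
      · left
        intro j
        rw [hent f j]
        exact h0 (j:ℕ) j.isLt
      · right
        refine ⟨s, hs, l, hl, t, ht1, ht2, ?_, ?_, ?_, hbr⟩
        · intro j hjt
          rw [hent f j]
          exact h1 (j:ℕ) j.isLt hjt
        · intro j hjt1 hjt2
          rw [hent f j]
          exact h2 (j:ℕ) j.isLt hjt1 hjt2
        · intro j hjt
          rw [hent f j]
          exact h3 (j:ℕ) j.isLt hjt
  rw [bigIff, step1,
    Stmt12Aux.ice_iff N M hN bb mf hskew'' hfrozen'' hm'']
  constructor
  · rintro ⟨hS, hR⟩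
    have pal := Stmt12Aux.smallcond_pal N hN bb mf
      (fun i j hi hj => hskew'' i j (by omega) (by omega)) hm'' hS
    refine ⟨step3.2 hS, fun f => ?_⟩
    exact (rowTrans f).2 (Stmt12Aux.row_forward N hN mf _ pal (hR (f:ℕ) f.isLt))
  · rintro ⟨h1, h2⟩
    refine ⟨step3.1 h1, fun f hf => ?_⟩
    exact Stmt12Aux.row_backward N hN mf _ ((rowTrans ⟨f, hf⟩).1 (h2 ⟨f, hf⟩))
end

section
/- Let K be a field, let N ≥ 2 and 1 ≤ k ≤ N−1, and let (x_n)_{n≥1} be a sequence in K with x_n ≠ 0 for all n, satisfying x_n x_{n+N} = x_{n+k} x_{n+N−k} + 1 for all n ≥ 1. Define J_n := (x_n + x_{n+2k})/x_{n+k}. Then J_{n+N−k} = J_n for all n ≥ 1. -/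
/-- Periodicity of the quantities `J_n = (x_n + x_{n+2k})/x_{n+k}` for the recurrence
`x_n x_{n+N} = x_{n+k} x_{n+N−k} + 1` associated with the period 1 primitive
`P_N^(k)`: `J_{n+N−k} = J_n`. -/
theorem stmt13 (K : Type*) [Field K] (N k : ℕ) (hN : 2 ≤ N) (hk1 : 1 ≤ k)
    (hk2 : k ≤ N - 1) (x : ℕ → K) (hx : ∀ n, 1 ≤ n → x n ≠ 0)
    (hrec : ∀ n, 1 ≤ n → x n * x (n + N) = x (n + k) * x (n + N - k) + 1) :
    ∀ n, 1 ≤ n →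
      (x (n + (N - k)) + x (n + (N - k) + 2 * k)) / x (n + (N - k) + k)
        = (x n + x (n + 2 * k)) / x (n + k) := by
  intro n hn
  have hkN : k ≤ N := le_trans hk2 (Nat.sub_le N 1)
  have h1 := hrec n hn
  have h2 := hrec (n + k) (by omega)
  have e1 : n + N - k = n + (N - k) := by omega
  have e2 : n + k + N = n + (N - k) + 2 * k := by omega
  have e3 : n + k + N - k = n + N := by omega
  have e4 : n + k + k = n + 2 * k := by omega
  have e5 : n + (N - k) + k = n + N := by omega
  rw [e1] at h1
  rw [e2, e4, show n + (N - k) + 2 * k - k = n + N from by omega] at h2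
  rw [e5]
  have hxk : x (n + k) ≠ 0 := hx _ (by omega)
  have hxN : x (n + N) ≠ 0 := hx _ (by omega)
  rw [div_eq_div_iff hxN hxk]
  linear_combination h2 - h1
end

section
/- Let K be a field, let N ≥ 2, and let (x_n)_{n≥1} be a sequence in K with x_n ≠ 0 for all n, satisfying x_n x_{n+N} = x_{n+1} x_{n+N−1} + 1 for all n ≥ 1. Set c_n := (x_n + x_{n+2})/x_{n+1}, so that c_{n+N−1} = c_n for all n. For n ≥ 1 and k ≥ 1, let t^{n}_{k,alt} denote the sum, over all sequences 1 ≤ i₁ < i₂ < ⋯ < i_k ≤ n in which consecutive indices have opposite parity (i.e. i_{j+1} − i_j is odd for each j), of the products c_{i₁} c_{i₂} ⋯ c_{i_k}; and set t^{n}_{0,alt} := 2. Then x_1 + x_{2N−1} = S_{N,1} · x_N, where S_{N,1} = (−1)^{r−1} Σ_{k=0}^{r−1} (−1)^k t^{(2r−1)}_{2k+1,alt} if N = 2r is even, and S_{N,1} = (−1)^{r−1} Σ_{k=0}^{r−1} (−1)^k t^{(2r−2)}_{2k,alt} if N = 2r−1 is odd. -/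
/-!
Clearing the denominator in `c_n` gives the linear recurrence `x_{n+2} = c_n x_{n+1} - x_n`,
and subtracting two consecutive exchange relations shows that `c` has period `p = N - 1`.
For a three-term recurrence with `p`-periodic coefficients, the Casoratian of `x` against the
continuant solution gives `x_1 + x_{2p+1} = T x_{p+1}`, where
`T = K(c_1, …, c_p) - K(c_2, …, c_{p-1})` is the trace of the monodromy matrix.

A continuant `K(c_1, …, c_n)` is a signed sum over the chains `s ⊆ [1, n]` of alternating
parity whose complement splits into adjacent pairs, i.e. whose first element is odd and whose
last element has the parity of `n`; each pair contributes a factor `-1`. Sorting all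
alternating chains according to the parity of their last element splits the alternating sum
into the two continuants of `T`; the empty chain is counted in both, whence `t_{0,alt} = 2`.
-/

open Finset

/-- `t^n_{k,alt}` for a sequence `c`: the sum, over all strictly increasing sequences
`1 ≤ i₁ < ⋯ < i_k ≤ n` in which consecutive indices have opposite parity
(i.e. `i_{j+1} − i_j` is odd for each `j`), of `c_{i₁} ⋯ c_{i_k}`, with
`t^n_{0,alt} := 2`. -/
def altSum {K : Type*} [CommRing K] (c : ℕ → K) (n k : ℕ) : K :=
  if k = 0 then 2
  else ∑ s ∈ (Finset.powersetCard k (Finset.Icc 1 n)).filter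
      (fun s => (s.sort (· ≤ ·)).IsChain fun a b => (a + b) % 2 = 1),
    ∏ i ∈ s, c i

section Continuant

variable {K : Type*} [CommRing K]

/-- `contin d (n + 1)` is the continuant `K(d₀, …, d_{n-1})`. -/
def contin (d : ℕ → K) : ℕ → K
  | 0 => 0
  | 1 => 1
  | n + 2 => d n * contin d (n + 1) - contin d n

@[simp] theorem contin_zero (d : ℕ → K) : contin d 0 = 0 := rfl

@[simp] theorem contin_one (d : ℕ → K) : contin d 1 = 1 := rfl

theorem contin_add_two (d : ℕ → K) (n : ℕ) :
    contin d (n + 2) = d n * contin d (n + 1) - contin d n := rfl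

variable {d y z : ℕ → K}

theorem casoratian_eq (hy : ∀ n, y (n + 2) = d n * y (n + 1) - y n)
    (hz : ∀ n, z (n + 2) = d n * z (n + 1) - z n) (n : ℕ) :
    z (n + 1) * y n - z n * y (n + 1) = z 1 * y 0 - z 0 * y 1 := by
  induction n with
  | zero => rfl
  | succ n ih => rw [hy n, hz n]; linear_combination ih

theorem eq_contin_mul_sub (hy : ∀ n, y (n + 2) = d n * y (n + 1) - y n) (n : ℕ) :
    y (n + 1) = contin d (n + 1) * y 1 - contin (fun i => d (i + 1)) n * y 0 := by
  induction n using Nat.twoStepInduction with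
  | zero => simp [contin]
  | one => simp [contin, hy 0]
  | more n ih1 ih2 =>
    rw [hy (n + 1), ih1, ih2, contin_add_two d (n + 1), contin_add_two (fun i => d (i + 1)) n]
    ring

theorem add_eq_trace_mul {p : ℕ} (hy : ∀ n, y (n + 2) = d n * y (n + 1) - y n)
    (hd : ∀ n, d (n + (p + 1)) = d n) :
    y 0 + y (2 * (p + 1)) =
      (contin d (p + 2) - contin (fun i => d (i + 1)) p) * y (p + 1) := by
  have hshift : ∀ n, y (n + 2 + (p + 1)) = d n * y (n + 1 + (p + 1)) - y (n + (p + 1)) := by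
    intro n
    rw [add_right_comm n 2, add_right_comm n 1, ← hd n]
    exact hy _
  have hfar := eq_contin_mul_sub (y := fun n => y (n + (p + 1))) hshift p
  have hcas := casoratian_eq hy (contin_add_two d) (p + 1)
  simp only [contin_zero, contin_one, zero_mul, one_mul, sub_zero, zero_add,
    add_comm 1 (p + 1)] at hfar hcas
  rw [two_mul]
  linear_combination hfar - hcas

end Continuant

section Chains

def IsParityAlternating (s : Finset ℕ) : Prop :=
  (s.sort (· ≤ ·)).IsChain fun a b => (a + b) % 2 = 1

instance : DecidablePred IsParityAlternating := fun s =>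
  inferInstanceAs (Decidable ((s.sort (· ≤ ·)).IsChain fun a b => (a + b) % 2 = 1))

variable {s : Finset ℕ} {a b : ℕ}

theorem sort_insert_of_forall_lt (h : ∀ x ∈ s, x < a) :
    (insert a s).sort (· ≤ ·) = s.sort (· ≤ ·) ++ [a] := by
  have ha : a ∉ s := fun ha => (h a ha).false
  refine List.Perm.eq_of_pairwise' (pairwise_sort _ _) ?_ ?_
  · refine List.pairwise_append.2 ⟨pairwise_sort _ _, List.pairwise_singleton _ _, ?_⟩
    simp only [mem_sort, List.mem_singleton]
    rintro x hx _ rfl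
    exact (h x hx).le
  · refine (sort_perm_toList (r := (· ≤ ·)) _).trans ((toList_insert ha).trans ?_)
    exact ((sort_perm_toList (r := (· ≤ ·)) s).symm.cons a).trans
      (List.perm_append_singleton a _).symm

theorem isParityAlternating_insert_iff (h : ∀ x ∈ s, x < a) :
    IsParityAlternating (insert a s) ↔
      IsParityAlternating s ∧ ∀ m ∈ (s.sort (· ≤ ·)).getLast?, (m + a) % 2 = 1 := by
  rw [IsParityAlternating, sort_insert_of_forall_lt h, List.isChain_append]
  simp [IsParityAlternating]

theorem isParityAlternating_insert_insert_iff (hab : a < b) (h : ∀ x ∈ s, x < a) :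
    IsParityAlternating (insert b (insert a s)) ↔
      IsParityAlternating (insert a s) ∧ (a + b) % 2 = 1 := by
  have hb : ∀ x ∈ insert a s, x < b := by
    simp only [mem_insert, forall_eq_or_imp]
    exact ⟨hab, fun x hx => (h x hx).trans hab⟩
  rw [isParityAlternating_insert_iff hb, sort_insert_of_forall_lt h, List.getLast?_concat]
  simp

theorem isParityAlternating_insert_congr (ha : ∀ x ∈ s, x < a) (hb : ∀ x ∈ s, x < b)
    (hab : a % 2 = b % 2) :
    IsParityAlternating (insert a s) ↔ IsParityAlternating (insert b s) := by
  simp only [isParityAlternating_insert_iff ha, isParityAlternating_insert_iff hb,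
    Nat.add_mod _ a, Nat.add_mod _ b, hab]

theorem getLast?_sort_eq_none_iff : (s.sort (· ≤ ·)).getLast? = none ↔ s = ∅ := by
  rw [List.getLast?_eq_none_iff, ← List.length_eq_zero_iff, length_sort, card_eq_zero]

theorem isParityAlternating_insert_or_insert_iff (h : ∀ x ∈ s, x < a) :
    IsParityAlternating (insert (a + 1) s) ∨ IsParityAlternating (insert a s) ↔
      IsParityAlternating s := by
  have h' : ∀ x ∈ s, x < a + 1 := fun x hx => (h x hx).trans a.lt_succ_self
  rw [isParityAlternating_insert_iff h, isParityAlternating_insert_iff h']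
  refine ⟨fun h => h.elim And.left And.left, fun hs => ?_⟩
  rcases hl : (s.sort (· ≤ ·)).getLast? with _ | m
  · simp [hs]
  · simp only [Option.mem_def, Option.some.injEq, forall_eq', hs, true_and]
    omega

theorem isParityAlternating_insert_and_insert_iff (h : ∀ x ∈ s, x < a) :
    IsParityAlternating (insert (a + 1) s) ∧ IsParityAlternating (insert a s) ↔ s = ∅ := by
  have h' : ∀ x ∈ s, x < a + 1 := fun x hx => (h x hx).trans a.lt_succ_self
  rw [isParityAlternating_insert_iff h, isParityAlternating_insert_iff h',
    ← getLast?_sort_eq_none_iff]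
  rcases hl : (s.sort (· ≤ ·)).getLast? with _ | m
  · obtain rfl := getLast?_sort_eq_none_iff.1 hl
    simp [IsParityAlternating]
  · simp only [Option.mem_def, Option.some.injEq, forall_eq', reduceCtorEq, iff_false]
    omega

end Chains

section ChainSums

variable {K : Type*} [CommRing K] (c : ℕ → K)

theorem sum_powerset_Icc_succ (n : ℕ) (g : Finset ℕ → K) :
    ∑ s ∈ (Icc 1 (n + 1)).powerset, g s =
      ∑ u ∈ (Icc 1 n).powerset, (g u + g (insert (n + 1) u)) := by
  have hIcc : Icc 1 (n + 1) = insert (n + 1) (Icc 1 n) := by ext; simp; omega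
  rw [hIcc, sum_powerset_insert (by simp), sum_add_distrib]

theorem lt_of_mem_powerset_Icc {n : ℕ} {u : Finset ℕ} (hu : u ∈ (Icc 1 n).powerset) :
    ∀ x ∈ u, x < n + 1 := fun x hx => by
  have := mem_Icc.1 (mem_powerset.1 hu hx); omega

theorem card_le_of_mem_powerset_Icc {n : ℕ} {u : Finset ℕ} (hu : u ∈ (Icc 1 n).powerset) :
    #u ≤ n := by
  simpa using card_le_card (mem_powerset.1 hu)

/-- Sum over the chains `s ⊆ [1, n]` whose last element has the parity of `n` (so that `n + 1`
extends them), weighted by `f` of the number `n - #s` of indices left out. -/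
def chainSum (n : ℕ) (f : ℕ → K) : K :=
  ∑ s ∈ (Icc 1 n).powerset with IsParityAlternating (insert (n + 1) s),
    f (n - #s) * ∏ i ∈ s, c i

theorem chainSum_zero (f : ℕ → K) : chainSum c 0 f = f 0 := by
  simp [chainSum, filter_singleton, IsParityAlternating]

theorem chainSum_succ (n : ℕ) (f : ℕ → K) :
    chainSum c (n + 1) f = c (n + 1) * chainSum c n f +
      ∑ u ∈ (Icc 1 n).powerset with IsParityAlternating (insert (n + 2) u),
        f (n + 1 - #u) * ∏ i ∈ u, c i := by
  rw [chainSum, chainSum, sum_filter, sum_powerset_Icc_succ, sum_add_distrib, add_comm,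
    sum_filter, mul_sum]
  congr 1
  · refine sum_congr rfl fun u hu => ?_
    have hlt := lt_of_mem_powerset_Icc hu
    have hnot : n + 1 ∉ u := fun h => (hlt _ h).false
    simp only [isParityAlternating_insert_insert_iff (Nat.lt_succ_self _) hlt,
      card_insert_of_notMem hnot, prod_insert hnot, Nat.add_sub_add_right,
      show (n + 1 + (n + 1 + 1)) % 2 = 1 by omega, and_true, mul_ite, mul_zero]
    ring_nf
  · rw [sum_filter]

theorem sum_isParityAlternating_insert_add_three (n : ℕ) (f : ℕ → K) :
    ∑ u ∈ (Icc 1 (n + 1)).powerset with IsParityAlternating (insert (n + 3) u),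
        f (n + 2 - #u) * ∏ i ∈ u, c i =
      chainSum c n fun m => f (m + 2) := by
  rw [chainSum, sum_filter, sum_powerset_Icc_succ, sum_filter]
  refine sum_congr rfl fun u hu => ?_
  have hlt := lt_of_mem_powerset_Icc hu
  simp only [isParityAlternating_insert_insert_iff (by omega : n + 1 < n + 3) hlt,
    isParityAlternating_insert_congr (a := n + 3) (by grind) hlt (by omega),
    show n + 2 - #u = n - #u + 2 by have := card_le_of_mem_powerset_Icc hu; omega,
    show (n + 1 + (n + 3)) % 2 = 0 by omega]
  simp

theorem chainSum_add_two (n : ℕ) (f : ℕ → K) :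
    chainSum c (n + 2) f =
      c (n + 2) * chainSum c (n + 1) f + chainSum c n fun m => f (m + 2) := by
  rw [chainSum_succ, sum_isParityAlternating_insert_add_three]

theorem chainSum_one (f : ℕ → K) : chainSum c 1 f = c 1 * f 0 + f 1 := by
  rw [chainSum_succ, chainSum_zero]
  simp [filter_singleton, IsParityAlternating]

theorem chainSum_add_two_of_antiperiodic {f : ℕ → K} (hf : ∀ m, f (m + 2) = -f m) (n : ℕ) :
    chainSum c (n + 2) f = c (n + 2) * chainSum c (n + 1) f - chainSum c n f := by
  rw [chainSum_add_two, sub_eq_add_neg]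
  simp only [chainSum, hf, neg_mul, sum_neg_distrib]

end ChainSums

section Trace

variable {K : Type*} [CommRing K] (c : ℕ → K)

/-- `1, 0, -1, 0, 1, …`: the sign of a chain leaving out `m` indices, which must pair up
into `m / 2` adjacent pairs. -/
def pairSign : ℕ → K
  | 0 => 1
  | 1 => 0
  | m + 2 => -pairSign m

theorem pairSign_add_two (m : ℕ) : (pairSign (m + 2) : K) = -pairSign m := rfl

theorem chainSum_pairSign (n : ℕ) :
    chainSum c n pairSign = contin (fun i => c (i + 1)) (n + 1) := by
  induction n using Nat.twoStepInduction with
  | zero => simp [chainSum_zero, pairSign]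
  | one => simp [chainSum_one, pairSign, contin_add_two]
  | more n ih1 ih2 =>
    rw [chainSum_add_two_of_antiperiodic c pairSign_add_two, ih1, ih2]
    rfl

theorem chainSum_pairSign_succ (n : ℕ) :
    chainSum c n (fun m => pairSign (m + 1)) = -contin (fun i => c (i + 2)) n := by
  induction n using Nat.twoStepInduction with
  | zero => simp [chainSum_zero, pairSign]
  | one => simp [chainSum_one, pairSign]
  | more n ih1 ih2 =>
    rw [chainSum_add_two_of_antiperiodic c (fun m => pairSign_add_two (m + 1)), ih1, ih2,
      contin_add_two]
    ring

theorem sum_isParityAlternating_add (n : ℕ) (f : ℕ → K) :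
    ∑ s ∈ (Icc 1 (n + 1)).powerset with IsParityAlternating s,
        f (n + 1 - #s) * ∏ i ∈ s, c i + f (n + 1) =
      chainSum c (n + 1) f + chainSum c n fun m => f (m + 1) := by
  set F : Finset ℕ → K := fun u => f (n + 1 - #u) * ∏ i ∈ u, c i
  have hlast : chainSum c n (fun m => f (m + 1)) =
      ∑ u ∈ (Icc 1 n).powerset with IsParityAlternating (insert (n + 1) u), F u := by
    refine sum_congr rfl fun u hu => ?_
    simp only [F, show n + 1 - #u = n - #u + 1 by
      have := card_le_of_mem_powerset_Icc (mem_filter.1 hu).1; omega]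
  have hsplit : ∑ s ∈ (Icc 1 (n + 1)).powerset with IsParityAlternating s, F s =
      ∑ u ∈ (Icc 1 n).powerset with IsParityAlternating u, F u +
        c (n + 1) * chainSum c n f := by
    simp only [chainSum, sum_filter]
    rw [sum_powerset_Icc_succ, sum_add_distrib, mul_sum]
    congr 1
    refine sum_congr rfl fun u hu => ?_
    have hnot : n + 1 ∉ u := fun h => (lt_of_mem_powerset_Icc hu _ h).false
    simp only [F, card_insert_of_notMem hnot, prod_insert hnot, Nat.add_sub_add_right, mul_ite,
      mul_zero]
    ring_nf
  have hunion := sum_union_inter (f := F)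
    (s₁ := {u ∈ (Icc 1 n).powerset | IsParityAlternating (insert (n + 2) u)})
    (s₂ := {u ∈ (Icc 1 n).powerset | IsParityAlternating (insert (n + 1) u)})
  rw [← filter_or, ← filter_and] at hunion
  rw [filter_congr fun u hu => isParityAlternating_insert_or_insert_iff
      (lt_of_mem_powerset_Icc hu)] at hunion
  rw [filter_congr fun u hu => isParityAlternating_insert_and_insert_iff
      (lt_of_mem_powerset_Icc hu)] at hunion
  rw [filter_eq', if_pos (empty_mem_powerset _), sum_singleton] at hunion
  rw [hsplit, chainSum_succ, hlast]
  simp only [F, card_empty, Nat.sub_zero, prod_empty, mul_one] at hunion ⊢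
  linear_combination hunion

end Trace

section Reindexing

variable {K : Type*} [CommRing K] (c : ℕ → K)

theorem altSum_eq (n k : ℕ) :
    altSum c n k = (if k = 0 then 1 else 0) +
      ∑ s ∈ powersetCard k (Icc 1 n) with IsParityAlternating s, ∏ i ∈ s, c i := by
  rcases k with _ | k
  · simp [altSum, filter_singleton, IsParityAlternating]
    norm_num
  · rw [altSum, if_neg k.succ_ne_zero, if_neg k.succ_ne_zero, zero_add]
    rfl

theorem sum_range_mul_altSum (n : ℕ) (g : ℕ → K) :
    ∑ k ∈ range (n + 1), g k * altSum c n k =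
      g 0 + ∑ s ∈ (Icc 1 n).powerset with IsParityAlternating s, g #s * ∏ i ∈ s, c i := by
  simp only [altSum_eq, mul_add, sum_add_distrib, mul_ite, mul_one, mul_zero]
  rw [sum_ite_eq' _ _ g, if_pos (mem_range.2 n.succ_pos),
    ← sum_fiberwise_of_maps_to (g := card) (t := range (n + 1)) fun s hs =>
      mem_range.2 (Nat.lt_succ_of_le (card_le_of_mem_powerset_Icc (mem_filter.1 hs).1))]
  refine congrArg _ (sum_congr rfl fun k _ => ?_)
  rw [mul_sum]
  refine sum_congr ?_ fun s hs => by rw [(mem_filter.1 hs).2]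
  ext s
  simp only [mem_filter, mem_powersetCard, mem_powerset]
  tauto

theorem sum_pairSign_mul_altSum (n : ℕ) :
    ∑ k ∈ range (n + 2), pairSign (n + 1 - k) * altSum c (n + 1) k =
      contin (fun i => c (i + 1)) (n + 2) - contin (fun i => c (i + 2)) n := by
  rw [sum_range_mul_altSum, Nat.sub_zero, add_comm, sum_isParityAlternating_add,
    chainSum_pairSign, chainSum_pairSign_succ, sub_eq_add_neg]

theorem sum_range_pairSign_mul (m e : ℕ) (he : e ≤ 1) (F : ℕ → K) :
    ∑ k ∈ range (2 * m + e + 1), pairSign (2 * m + e - k) * F k =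
      (-1) ^ m * ∑ k ∈ range (m + 1), (-1) ^ k * F (2 * k + e) := by
  induction m with
  | zero => interval_cases e <;> simp [pairSign, sum_range_succ]
  | succ m ih =>
    have hshift : ∀ k ∈ range (2 * m + e + 1),
        (pairSign (2 * (m + 1) + e - k) : K) * F k = -(pairSign (2 * m + e - k) * F k) :=
      fun k hk => by
        rw [show 2 * (m + 1) + e - k = 2 * m + e - k + 2 by grind, pairSign_add_two, neg_mul]
    rw [show 2 * (m + 1) + e + 1 = 2 * m + e + 1 + 1 + 1 by ring, sum_range_succ,
      sum_range_succ, sum_congr rfl hshift, sum_neg_distrib, ih, sum_range_succ _ (m + 1),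
      show 2 * (m + 1) + e - (2 * m + e + 1) = 1 by omega,
      show 2 * (m + 1) + e - (2 * m + e + 1 + 1) = 0 by omega,
      show 2 * (m + 1) + e = 2 * m + e + 1 + 1 by ring]
    simp only [pairSign, pow_succ]
    have hsq : ((-1 : K) ^ m) ^ 2 = 1 := by rw [← pow_mul, mul_comm, pow_mul]; simp
    linear_combination (-F (2 * m + e + 1 + 1)) * hsq

end Reindexing

theorem exchange_ratio_periodic {K : Type*} [Field K] {x c : ℕ → K} {p n : ℕ}
    (hx : ∀ n, 1 ≤ n → x n ≠ 0)
    (hrec : ∀ n, 1 ≤ n → x n * x (n + p + 1) = x (n + 1) * x (n + p) + 1)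
    (hc : ∀ n, c n = (x n + x (n + 2)) / x (n + 1)) (hn : 1 ≤ n) : c (n + p) = c n := by
  have h1 := hrec n hn
  have h2 := hrec (n + 1) (by omega)
  rw [show n + 1 + p + 1 = n + p + 2 by ring, show n + 1 + p = n + p + 1 by ring] at h2
  rw [hc, hc, div_eq_div_iff (hx _ (by omega)) (hx _ (by omega))]
  linear_combination h2 - h1

/-- Explicit linearisation for the recurrence of the primitive `P_N^(1)`:
`x_1 + x_{2N−1} = S_{N,1} x_N` with `S_{N,1}` given by alternating-parity sums in the
periodic quantities `c_n = (x_n + x_{n+2})/x_{n+1}`. -/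
theorem stmt15 (K : Type*) [Field K] (N : ℕ) (hN : 2 ≤ N) (x : ℕ → K)
    (hx : ∀ n, 1 ≤ n → x n ≠ 0)
    (hrec : ∀ n, 1 ≤ n → x n * x (n + N) = x (n + 1) * x (n + N - 1) + 1)
    (c : ℕ → K) (hc : ∀ n, c n = (x n + x (n + 2)) / x (n + 1)) :
    (∀ r, 1 ≤ r → N = 2 * r →
      x 1 + x (2 * N - 1) =
        ((-1 : K) ^ (r - 1) *
          ∑ k ∈ Finset.range r, (-1 : K) ^ k * altSum c (2 * r - 1) (2 * k + 1)) * x N) ∧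
    (∀ r, 1 ≤ r → N = 2 * r - 1 →
      x 1 + x (2 * N - 1) =
        ((-1 : K) ^ (r - 1) *
          ∑ k ∈ Finset.range r, (-1 : K) ^ k * altSum c (2 * r - 2) (2 * k)) * x N) := by
  have htrace : ∀ n, N = n + 1 + 1 → x 1 + x (2 * N - 1) =
      (∑ k ∈ range (n + 1 + 1), pairSign (n + 1 - k) * altSum c (n + 1) k) * x N := by
    rintro n rfl
    have hlin : ∀ k, x (k + 2 + 1) = c (k + 1) * x (k + 1 + 1) - x (k + 1) := fun k => by
      have h := hc (k + 1)
      rw [eq_div_iff (hx _ (by omega))] at h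
      linear_combination -h
    have hper : ∀ m, c (m + (n + 1) + 1) = c (m + 1) := fun m => by
      rw [add_right_comm]
      refine exchange_ratio_periodic hx (fun k hk => ?_) hc (by omega)
      have := hrec k hk
      rwa [show k + (n + 1 + 1) - 1 = k + (n + 1) by omega] at this
    rw [sum_pairSign_mul_altSum, show 2 * (n + 1 + 1) - 1 = 2 * (n + 1) + 1 by omega]
    exact add_eq_trace_mul (y := fun k => x (k + 1)) hlin hper
  refine ⟨fun r hr hNr => ?_, fun r hr hNr => ?_⟩
  · obtain ⟨m, rfl⟩ : ∃ m, r = m + 1 := ⟨r - 1, by omega⟩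
    rw [htrace (2 * m) (by omega), sum_range_pairSign_mul m 1 le_rfl,
      show 2 * (m + 1) - 1 = 2 * m + 1 by omega, Nat.add_sub_cancel]
  · obtain ⟨m, rfl⟩ : ∃ m, r = m + 1 + 1 := ⟨r - 2, by omega⟩
    rw [htrace (2 * m + 1) (by omega), show 2 * m + 1 + 1 = 2 * (m + 1) + 0 by ring,
      sum_range_pairSign_mul (m + 1) 0 zero_le_one,
      show 2 * (m + 1 + 1) - 2 = 2 * (m + 1) + 0 by omega, Nat.add_sub_cancel]
    simp only [add_zero]
end
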